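/- arXiv:2403.07647 — 4 statements merged into one kernel-verified Lean document; each statement's English description precedes it below -/
import Mathlib

section
/- Let A be a timed automaton that is weakly (+∞)-ET-opaque (i.e., DPriv(A) ⊆ DPub(A)). Then there exists a bound Δ ∈ ℝ≥0 ∪ {+∞} such that A is fully Δ-ET-opaque if and only if A is fully (+∞)-ET-opaque (i.e., DPriv(A) = DPub(A)). -/
open scoped ENNReal

/-- A clock constraint with real constant: (clock index, comparison code, constant).
Comparison codes: 0 ↦ <, 1 ↦ ≤, 2 ↦ =, 3 ↦ ≥, otherwise ↦ >. -/
abbrev RConstraint := ℕ × ℕ × ℝ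

/-- A guard is a (conjunction of a) list of constraints. -/
abbrev RGuard := List RConstraint

/-- An edge: (source, guard, clocks to reset, target). -/
abbrev REdge := ℕ × RGuard × List ℕ × ℕ

/-- Satisfaction of a single constraint by a clock valuation. -/
def satC (μ : ℕ → ℝ) (c : RConstraint) : Prop :=
  match c.2.1 with
  | 0 => μ c.1 < c.2.2
  | 1 => μ c.1 ≤ c.2.2
  | 2 => μ c.1 = c.2.2
  | 3 => c.2.2 ≤ μ c.1
  | _ => c.2.2 < μ c.1

/-- Satisfaction of a guard (conjunction of constraints). -/
def satG (μ : ℕ → ℝ) (g : RGuard) : Prop := ∀ c ∈ g, satC μ c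

/-- Letting time `d` elapse in a clock valuation. -/
def delayVal (μ : ℕ → ℝ) (d : ℝ) : ℕ → ℝ := fun x => μ x + d

/-- Resetting the clocks in `R` to `0`. -/
def resetVal (μ : ℕ → ℝ) (R : List ℕ) : ℕ → ℝ := fun x => if x ∈ R then 0 else μ x

/-- A (semantic) timed automaton: locations and clocks are natural numbers,
with initial, private and final locations, invariants and edges. -/
structure RTA where
  init : ℕ
  privLoc : ℕ
  finalLoc : ℕ
  inv : ℕ → RGuard
  edges : List REdge

/-- `A.IsRunFrom ℓ μ ρ` : `ρ` (a list of (delay, edge) pairs) is a valid run of `A`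
starting in state `(ℓ, μ)`: delays are nonnegative, the invariant of the current
location holds throughout each delay, each edge belongs to `A`, starts at the current
location, its guard is satisfied after the delay, and the invariant of the target
location holds after resetting the clocks of the edge. -/
def RTA.IsRunFrom (A : RTA) : ℕ → (ℕ → ℝ) → List (ℝ × REdge) → Prop
  | _, _, [] => True
  | ℓ, μ, (d, e) :: rest =>
    0 ≤ d ∧ e ∈ A.edges ∧ e.1 = ℓ ∧
    (∀ t : ℝ, 0 ≤ t → t ≤ d → satG (delayVal μ t) (A.inv ℓ)) ∧
    satG (delayVal μ d) e.2.1 ∧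
    satG (resetVal (delayVal μ d) e.2.2.1) (A.inv e.2.2.2) ∧
    RTA.IsRunFrom A e.2.2.2 (resetVal (delayVal μ d) e.2.2.1) rest

/-- A run of `A`: a valid run from the initial state (initial location, all clocks 0). -/
def RTA.IsRun (A : RTA) (ρ : List (ℝ × REdge)) : Prop :=
  satG (fun _ => 0) (A.inv A.init) ∧ A.IsRunFrom A.init (fun _ => 0) ρ

/-- The sequence of locations visited by a run. -/
def RTA.locSeq (A : RTA) (ρ : List (ℝ × REdge)) : List ℕ :=
  A.init :: ρ.map (fun s => s.2.2.2.2)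

/-- The duration of a run: the sum of its delays. -/
def runDur (ρ : List (ℝ × REdge)) : ℝ := (ρ.map Prod.fst).sum

/-- Helper scanning the reversed run: sums the delays elapsed since the last entry
into location `p`. -/
def durPrivAux (p : ℕ) : List (ℝ × REdge) → ℝ → ℝ
  | [], acc => acc
  | (d, e) :: rest, acc => if e.2.2.2 = p then acc else durPrivAux p rest (acc + d)

/-- The time elapsed between the last entry into the private location and the end
of the run. -/
def RTA.durPriv (A : RTA) (ρ : List (ℝ × REdge)) : ℝ := durPrivAux A.privLoc ρ.reverse 0

/-- A run reaching the final location, stopped at the first occurrence of the final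
location (so durations are measured up to the first occurrence of `finalLoc`). -/
def RTA.ReachesFinal (A : RTA) (ρ : List (ℝ × REdge)) : Prop :=
  A.IsRun ρ ∧ (A.locSeq ρ).getLast? = some A.finalLoc ∧ A.finalLoc ∉ (A.locSeq ρ).dropLast

/-- A private run: reaches the final location after visiting the private location. -/
def RTA.IsPrivateRun (A : RTA) (ρ : List (ℝ × REdge)) : Prop :=
  A.ReachesFinal ρ ∧ A.privLoc ∈ (A.locSeq ρ).dropLast

/-- A public run: reaches the final location without visiting the private location. -/
def RTA.IsPublicRun (A : RTA) (ρ : List (ℝ × REdge)) : Prop :=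
  A.ReachesFinal ρ ∧ A.privLoc ∉ (A.locSeq ρ).dropLast

/-- Durations of public runs. -/
def RTA.DPub (A : RTA) : Set ℝ := {t | ∃ ρ, A.IsPublicRun ρ ∧ runDur ρ = t}

/-- Durations of private runs. -/
def RTA.DPriv (A : RTA) : Set ℝ := {t | ∃ ρ, A.IsPrivateRun ρ ∧ runDur ρ = t}

/-- Durations of private runs whose last entry into the private location happened
at most `Δ` time units before reaching the final location. -/
def RTA.DVisitLE (A : RTA) (Δ : ℝ≥0∞) : Set ℝ :=
  {t | ∃ ρ, A.IsPrivateRun ρ ∧ ENNReal.ofReal (A.durPriv ρ) ≤ Δ ∧ runDur ρ = t}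

/-- Durations of private runs whose last entry into the private location happened
more than `Δ` time units before reaching the final location. -/
def RTA.DVisitGT (A : RTA) (Δ : ℝ≥0∞) : Set ℝ :=
  {t | ∃ ρ, A.IsPrivateRun ρ ∧ Δ < ENNReal.ofReal (A.durPriv ρ) ∧ runDur ρ = t}

/-- Weak Δ-ET-opacity: `DVisit≤Δ(A) ⊆ DVisit>Δ(A) ∪ DPub(A)`. -/
def RTA.WeaklyOpaque (A : RTA) (Δ : ℝ≥0∞) : Prop :=
  A.DVisitLE Δ ⊆ A.DVisitGT Δ ∪ A.DPub

/-- Full Δ-ET-opacity: `DVisit≤Δ(A) = DVisit>Δ(A) ∪ DPub(A)`. -/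
def RTA.FullyOpaque (A : RTA) (Δ : ℝ≥0∞) : Prop :=
  A.DVisitLE Δ = A.DVisitGT Δ ∪ A.DPub

/-- A constraint with integer constant. -/
abbrev ZConstraint := ℕ × ℕ × ℤ
abbrev ZGuard := List ZConstraint
abbrev ZEdge := ℕ × ZGuard × List ℕ × ℕ

/-- A timed automaton with integer constants, as finite data. -/
structure TAData where
  init : ℕ
  privLoc : ℕ
  finalLoc : ℕ
  invs : List ZGuard
  edges : List ZEdge

def zC (c : ZConstraint) : RConstraint := (c.1, c.2.1, (c.2.2 : ℝ))

/-- The semantic timed automaton of a finite-data timed automaton. -/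
def TAData.toRTA (A : TAData) : RTA where
  init := A.init
  privLoc := A.privLoc
  finalLoc := A.finalLoc
  inv := fun ℓ => (A.invs.getD ℓ []).map zC
  edges := A.edges.map (fun e => (e.1, e.2.1.map zC, e.2.2.1, e.2.2.2))

/-- key step of Theorem 4: if `A` is weakly (+∞)-ET-opaque
(i.e., `DPriv(A) ⊆ DPub(A)`), then there exists a bound `Δ ∈ ℝ≥0 ∪ {+∞}` for which
`A` is fully Δ-ET-opaque iff `A` is fully (+∞)-ET-opaque (i.e., `DPriv(A) = DPub(A)`). -/
theorem full_exists_iff_full_top (A : TAData) (h : A.toRTA.WeaklyOpaque ⊤) :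
    (∃ Δ : ℝ≥0∞, A.toRTA.FullyOpaque Δ) ↔ A.toRTA.FullyOpaque ⊤ := by
  constructor
  · rintro ⟨Δ, hΔ⟩
    apply Set.Subset.antisymm h
    rintro t (⟨ρ, hρ, hgt, hd⟩ | ht)
    · exact absurd hgt (by simp)
    · have : t ∈ A.toRTA.DVisitLE Δ := by
        rw [RTA.FullyOpaque] at hΔ
        rw [hΔ]; exact Or.inr ht
      obtain ⟨ρ, hρ, _, hd⟩ := this
      exact ⟨ρ, hρ, le_top, hd⟩
  · intro htop
    exact ⟨⊤, htop⟩
end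

section
/- For every timed automaton A with integer constants and every non-integer bound Δ ∈ ℝ≥0 \ ℕ, the automaton A is weakly Δ-ET-opaque if and only if A is weakly (⌊Δ⌋ + 1/2)-ET-opaque. -/
open scoped ENNReal

/-! ### Auxiliary development: time stretching -/

/-- A time-stretching function compatible with integer constraints. -/
def Zcompat (f : ℝ → ℝ) : Prop :=
  f 0 = 0 ∧ ∀ (x y : ℝ) (c : ℤ),
    ((x - y ≤ (c : ℝ) ↔ f x - f y ≤ (c : ℝ)) ∧ ((x - y < (c : ℝ)) ↔ f x - f y < (c : ℝ)))

lemma Zcompat.mono {f : ℝ → ℝ} (hf : Zcompat f) {x y : ℝ} (h : x ≤ y) : f x ≤ f y := by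
  have := ((hf.2 x y 0).1).mp (by push_cast; linarith)
  push_cast at this; linarith

/-- Guards whose constants are all integers. -/
def IntG (g : RGuard) : Prop := ∀ c ∈ g, ∃ k : ℤ, c.2.2 = (k : ℝ)

def IntRTA (A : RTA) : Prop := (∀ ℓ, IntG (A.inv ℓ)) ∧ ∀ e ∈ A.edges, IntG e.2.1

lemma intRTA_toRTA (A : TAData) : IntRTA A.toRTA := by
  constructor
  · intro ℓ c hc
    rcases List.mem_map.mp hc with ⟨c', _, rfl⟩
    exact ⟨c'.2.2, rfl⟩
  · intro e he c hc
    rcases List.mem_map.mp he with ⟨e', _, rfl⟩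
    rcases List.mem_map.mp hc with ⟨c', _, rfl⟩
    exact ⟨c'.2.2, rfl⟩

lemma satC_between {c : RConstraint} {μ₁ μ₂ μ₃ : ℕ → ℝ}
    (h1 : satC μ₁ c) (h3 : satC μ₃ c)
    (h12 : μ₁ c.1 ≤ μ₂ c.1) (h23 : μ₂ c.1 ≤ μ₃ c.1) : satC μ₂ c := by
  obtain ⟨x, op, w⟩ := c
  rcases op with _ | _ | _ | _ | op <;> simp only [satC] at * <;> linarith

lemma satC_transfer {f : ℝ → ℝ} (hf : Zcompat f) {c : RConstraint} {k : ℤ}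
    (hc : c.2.2 = (k : ℝ)) {μ μ' : ℕ → ℝ} {u v : ℝ}
    (hu : μ c.1 = u - v) (hu' : μ' c.1 = f u - f v) (h : satC μ c) : satC μ' c := by
  obtain ⟨x, op, w⟩ := c
  dsimp at hc hu hu'
  subst hc
  have h1 := (hf.2 u v k).1
  have h2 := (hf.2 u v k).2
  rcases op with _ | _ | _ | _ | op <;>
    simp only [satC] at h ⊢ <;> rw [hu] at h <;> rw [hu']
  · exact h2.mp h
  · exact h1.mp h
  · have hle : f u - f v ≤ (k : ℝ) := h1.mp (le_of_eq h)
    have hge : ¬ (f u - f v < (k : ℝ)) := fun hcon => absurd (h2.mpr hcon) (by rw [h]; exact lt_irrefl _)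
    exact le_antisymm hle (not_lt.mp hge)
  · by_contra hcon
    push_neg at hcon
    exact absurd (h2.mpr hcon) (not_lt.mpr h)
  · by_contra hcon
    push_neg at hcon
    exact absurd (h1.mpr hcon) (not_le.mpr h)

lemma satG_transfer {f : ℝ → ℝ} (hf : Zcompat f) {g : RGuard} (hg : IntG g)
    {u : ℝ} {r : ℕ → ℝ} {μ μ' : ℕ → ℝ}
    (hμ : ∀ x, μ x = u - r x) (hμ' : ∀ x, μ' x = f u - f (r x))
    (h : satG μ g) : satG μ' g := by
  intro c hc
  obtain ⟨k, hk⟩ := hg c hc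
  exact satC_transfer hf hk (hμ c.1) (hμ' c.1) (h c hc)

/-- The run transformed by a stretch `f`, starting at absolute time `T`. -/
def stretchRun (f : ℝ → ℝ) : ℝ → List (ℝ × REdge) → List (ℝ × REdge)
  | _, [] => []
  | T, (d, e) :: rest => (f (T + d) - f T, e) :: stretchRun f (T + d) rest

lemma runDur_cons (d : ℝ) (e : REdge) (l : List (ℝ × REdge)) :
    runDur ((d, e) :: l) = d + runDur l := by simp [runDur]

lemma runDur_append_single (l : List (ℝ × REdge)) (d : ℝ) (e : REdge) :
    runDur (l ++ [(d, e)]) = runDur l + d := by simp [runDur]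

lemma stretchRun_locSeq (A : RTA) (f : ℝ → ℝ) :
    ∀ (ρ : List (ℝ × REdge)) (T : ℝ), A.locSeq (stretchRun f T ρ) = A.locSeq ρ := by
  have key : ∀ (ρ : List (ℝ × REdge)) (T : ℝ),
      (stretchRun f T ρ).map (fun s => s.2.2.2.2) = ρ.map (fun s => s.2.2.2.2) := by
    intro ρ
    induction ρ with
    | nil => intro T; rfl
    | cons hd tl ih =>
        intro T
        obtain ⟨d, e⟩ := hd
        simp [stretchRun, ih]
  intro ρ T
  simp [RTA.locSeq, key]

lemma stretchRun_runDur (f : ℝ → ℝ) :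
    ∀ (ρ : List (ℝ × REdge)) (T : ℝ), runDur (stretchRun f T ρ) = f (T + runDur ρ) - f T := by
  intro ρ
  induction ρ with
  | nil => intro T; simp [stretchRun, runDur]
  | cons hd tl ih =>
      intro T
      obtain ⟨d, e⟩ := hd
      rw [stretchRun, runDur_cons, ih (T + d), runDur_cons,
        show T + (d + runDur tl) = T + d + runDur tl by ring]
      ring

lemma stretchRun_append (f : ℝ → ℝ) :
    ∀ (l₁ l₂ : List (ℝ × REdge)) (T : ℝ),
      stretchRun f T (l₁ ++ l₂) = stretchRun f T l₁ ++ stretchRun f (T + runDur l₁) l₂ := by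
  intro l₁
  induction l₁ with
  | nil => intro l₂ T; simp [stretchRun, runDur]
  | cons hd tl ih =>
      intro l₂ T
      obtain ⟨d, e⟩ := hd
      simp only [List.cons_append, stretchRun, List.append_eq, runDur_cons]
      rw [ih l₂ (T + d), show T + (d + runDur tl) = T + d + runDur tl by ring]

lemma durPrivAux_shift (p : ℕ) :
    ∀ (l : List (ℝ × REdge)) (acc : ℝ), durPrivAux p l acc = durPrivAux p l 0 + acc := by
  intro l
  induction l with
  | nil => intro acc; simp [durPrivAux]
  | cons hd tl ih =>
      intro acc
      obtain ⟨d, e⟩ := hd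
      show (if e.2.2.2 = p then acc else durPrivAux p tl (acc + d)) =
        (if e.2.2.2 = p then 0 else durPrivAux p tl (0 + d)) + acc
      by_cases h : e.2.2.2 = p
      · rw [if_pos h, if_pos h]; ring
      · rw [if_neg h, if_neg h, ih (acc + d), ih (0 + d)]
        ring

lemma durPriv_append_single (A : RTA) (l : List (ℝ × REdge)) (d : ℝ) (e : REdge) :
    A.durPriv (l ++ [(d, e)]) =
      if e.2.2.2 = A.privLoc then 0 else d + A.durPriv l := by
  unfold RTA.durPriv
  rw [List.reverse_append, List.reverse_singleton, List.singleton_append]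
  show (if e.2.2.2 = A.privLoc then (0:ℝ) else durPrivAux A.privLoc l.reverse (0 + d)) = _
  by_cases h : e.2.2.2 = A.privLoc
  · rw [if_pos h, if_pos h]
  · rw [if_neg h, if_neg h, durPrivAux_shift]
    ring

lemma stretchRun_durPriv (A : RTA) (f : ℝ → ℝ) (ρ : List (ℝ × REdge)) :
    ∀ T : ℝ, A.durPriv (stretchRun f T ρ) =
      f (T + runDur ρ) - f (T + runDur ρ - A.durPriv ρ) := by
  induction ρ using List.reverseRecOn with
  | nil =>
      intro T
      simp [stretchRun, RTA.durPriv, durPrivAux, runDur]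
  | append_singleton l x ih =>
      intro T
      obtain ⟨d, e⟩ := x
      rw [stretchRun_append, show stretchRun f (T + runDur l) [(d, e)] =
        [(f (T + runDur l + d) - f (T + runDur l), e)] from rfl]
      rw [durPriv_append_single, durPriv_append_single, runDur_append_single]
      by_cases h : e.2.2.2 = A.privLoc
      · rw [if_pos h, if_pos h, sub_zero, sub_self]
      · rw [if_neg h, if_neg h, ih T,
          show T + (runDur l + d) - (d + A.durPriv l) = T + runDur l - A.durPriv l by ring,
          show T + (runDur l + d) = T + runDur l + d by ring]
        ring

lemma isRunFrom_stretch (A : RTA) (hA : IntRTA A) (f : ℝ → ℝ) (hf : Zcompat f) :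
    ∀ (ρ : List (ℝ × REdge)) (ℓ : ℕ) (r : ℕ → ℝ) (T : ℝ),
      A.IsRunFrom ℓ (fun x => T - r x) ρ →
      A.IsRunFrom ℓ (fun x => f T - f (r x)) (stretchRun f T ρ) := by
  intro ρ
  induction ρ with
  | nil => intro ℓ r T _; trivial
  | cons hd tl ih =>
      intro ℓ r T h
      obtain ⟨d, e⟩ := hd
      obtain ⟨hd0, he, hsrc, hinv, hg, hinv', hrest⟩ := h
      have hmono : f T ≤ f (T + d) := hf.mono (by linarith)
      set r' : ℕ → ℝ := fun x => if x ∈ e.2.2.1 then T + d else r x with hr'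
      have hresorig : resetVal (delayVal (fun x => T - r x) d) e.2.2.1 = fun x => (T + d) - r' x := by
        funext x
        by_cases hx : x ∈ e.2.2.1 <;> simp [resetVal, delayVal, hr', hx] <;> ring
      have hresnew : resetVal (delayVal (fun x => f T - f (r x)) (f (T + d) - f T)) e.2.2.1
          = fun x => f (T + d) - f (r' x) := by
        funext x
        by_cases hx : x ∈ e.2.2.1 <;> simp [resetVal, delayVal, hr', hx] <;> ring
      refine ⟨by linarith, he, hsrc, ?_, ?_, ?_, ?_⟩
      · -- invariant during the delay
        intro t ht0 htd c hc
        have s0 : satC (fun x => f T - f (r x)) c := by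
          refine satC_transfer hf (hA.1 ℓ c hc).choose_spec
            (μ := delayVal (fun x => T - r x) 0) ?_ rfl (hinv 0 le_rfl hd0 c hc)
          simp only [delayVal]; ring
        have s1 : satC (fun x => f (T + d) - f (r x)) c := by
          refine satC_transfer hf (hA.1 ℓ c hc).choose_spec
            (μ := delayVal (fun x => T - r x) d) ?_ rfl (hinv d hd0 le_rfl c hc)
          simp only [delayVal]; ring
        refine satC_between s0 s1 ?_ ?_
        · simp only [delayVal]; linarith
        · simp only [delayVal]; linarith
      · -- guard
        refine satG_transfer hf (hA.2 e he) (u := T + d) (r := r)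
          (μ := delayVal (fun x => T - r x) d) ?_ ?_ hg
        · intro x; simp only [delayVal]; ring
        · intro x; simp only [delayVal]; ring
      · -- invariant after reset
        rw [hresnew]
        refine satG_transfer hf (hA.1 e.2.2.2) (u := T + d) (r := r')
          (μ := resetVal (delayVal (fun x => T - r x) d) e.2.2.1) ?_ (fun x => rfl) hinv'
        intro x; rw [hresorig]
      · -- the rest of the run
        rw [hresnew]
        apply ih
        rw [← hresorig]
        exact hrest

lemma isRun_stretch (A : RTA) (hA : IntRTA A) (f : ℝ → ℝ) (hf : Zcompat f)
    (ρ : List (ℝ × REdge)) (h : A.IsRun ρ) :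
    A.IsRun (stretchRun f 0 ρ) ∧
    runDur (stretchRun f 0 ρ) = f (runDur ρ) ∧
    A.durPriv (stretchRun f 0 ρ) = f (runDur ρ) - f (runDur ρ - A.durPriv ρ) := by
  obtain ⟨hinv0, hrun⟩ := h
  have he : (fun x : ℕ => (0:ℝ) - (fun _ : ℕ => (0:ℝ)) x) = (fun _ : ℕ => (0:ℝ)) := by
    funext x; simp
  have h0' : A.IsRunFrom A.init (fun x : ℕ => (0:ℝ) - (fun _ : ℕ => (0:ℝ)) x) ρ := by
    rw [he]; exact hrun
  have h1 := isRunFrom_stretch A hA f hf ρ A.init (fun _ => (0:ℝ)) 0 h0'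
  have he2 : (fun x : ℕ => f 0 - f ((fun _ : ℕ => (0:ℝ)) x)) = (fun _ : ℕ => (0:ℝ)) := by
    funext x; simp [hf.1]
  rw [he2] at h1
  refine ⟨⟨hinv0, h1⟩, ?_, ?_⟩
  · rw [stretchRun_runDur, zero_add, hf.1, sub_zero]
  · rw [stretchRun_durPriv, zero_add]

lemma isPrivate_stretch (A : RTA) (hA : IntRTA A) (f : ℝ → ℝ) (hf : Zcompat f)
    (ρ : List (ℝ × REdge)) (h : A.IsPrivateRun ρ) :
    A.IsPrivateRun (stretchRun f 0 ρ) := by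
  obtain ⟨⟨hrun, hlast, hnf⟩, hpriv⟩ := h
  exact ⟨⟨(isRun_stretch A hA f hf ρ hrun).1, by rw [stretchRun_locSeq]; exact hlast,
    by rw [stretchRun_locSeq]; exact hnf⟩, by rw [stretchRun_locSeq]; exact hpriv⟩

lemma isPublic_stretch (A : RTA) (hA : IntRTA A) (f : ℝ → ℝ) (hf : Zcompat f)
    (ρ : List (ℝ × REdge)) (h : A.IsPublicRun ρ) :
    A.IsPublicRun (stretchRun f 0 ρ) := by
  obtain ⟨⟨hrun, hlast, hnf⟩, hpriv⟩ := h
  exact ⟨⟨(isRun_stretch A hA f hf ρ hrun).1, by rw [stretchRun_locSeq]; exact hlast,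
    by rw [stretchRun_locSeq]; exact hnf⟩, by rw [stretchRun_locSeq]; exact hpriv⟩

/-! ### Piecewise-linear fractional maps -/

noncomputable def pwl (p₁ p₂ q₁ q₂ x : ℝ) : ℝ :=
  if x ≤ p₁ then q₁ / p₁ * x
  else if x ≤ p₂ then q₁ + (q₂ - q₁) / (p₂ - p₁) * (x - p₁)
  else q₂ + (1 - q₂) / (1 - p₂) * (x - p₂)

structure PwlHyp (p₁ p₂ q₁ q₂ : ℝ) : Prop where
  hp0 : 0 ≤ p₁
  hp12 : p₁ ≤ p₂
  hp1 : p₂ < 1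
  hq0 : 0 ≤ q₁
  hq12 : q₁ ≤ q₂
  hq1 : q₂ < 1
  z1 : p₁ = 0 ↔ q₁ = 0
  e12 : p₁ = p₂ ↔ q₁ = q₂

namespace PwlHyp

variable {p₁ p₂ q₁ q₂ : ℝ}

lemma pwl_zero (H : PwlHyp p₁ p₂ q₁ q₂) : pwl p₁ p₂ q₁ q₂ 0 = 0 := by
  have h : pwl p₁ p₂ q₁ q₂ 0 = q₁ / p₁ * 0 := by
    simp only [pwl, if_pos H.hp0]
  rw [h, mul_zero]

lemma pwl_p1 (H : PwlHyp p₁ p₂ q₁ q₂) : pwl p₁ p₂ q₁ q₂ p₁ = q₁ := by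
  have h : pwl p₁ p₂ q₁ q₂ p₁ = q₁ / p₁ * p₁ := by
    simp only [pwl, le_refl, if_true]
  rw [h]
  rcases eq_or_lt_of_le H.hp0 with h0 | h0
  · rw [← h0, H.z1.mp h0.symm]; ring
  · rw [div_mul_cancel₀ _ (ne_of_gt h0)]

lemma pwl_p2 (H : PwlHyp p₁ p₂ q₁ q₂) : pwl p₁ p₂ q₁ q₂ p₂ = q₂ := by
  rcases eq_or_lt_of_le H.hp12 with h12 | h12
  · subst h12
    rw [H.pwl_p1]
    exact H.e12.mp rfl
  · have hne : ¬ (p₂ ≤ p₁) := not_le.mpr h12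
    have h : pwl p₁ p₂ q₁ q₂ p₂ = q₁ + (q₂ - q₁) / (p₂ - p₁) * (p₂ - p₁) := by
      simp only [pwl, hne, if_false, le_refl, if_true]
    rw [h, div_mul_cancel₀ _ (ne_of_gt (by linarith : (0:ℝ) < p₂ - p₁))]
    ring

lemma pwl_bounds (H : PwlHyp p₁ p₂ q₁ q₂) {x : ℝ} (hx0 : 0 ≤ x) (hx1 : x < 1) :
    0 ≤ pwl p₁ p₂ q₁ q₂ x ∧ pwl p₁ p₂ q₁ q₂ x < 1 := by
  unfold pwl
  by_cases h1 : x ≤ p₁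
  · rw [if_pos h1]
    rcases eq_or_lt_of_le H.hp0 with h0 | h0
    · have hx : x = 0 := le_antisymm (h0 ▸ h1) hx0
      subst hx
      rw [mul_zero]
      norm_num
    · have hs : 0 ≤ q₁ / p₁ := div_nonneg H.hq0 (le_of_lt h0)
      constructor
      · exact mul_nonneg hs hx0
      · have h2 : q₁ / p₁ * x ≤ q₁ / p₁ * p₁ := mul_le_mul_of_nonneg_left h1 hs
        rw [div_mul_cancel₀ _ (ne_of_gt h0)] at h2
        linarith [H.hq12, H.hq1]
  · push_neg at h1
    rw [if_neg (not_le.mpr h1)]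
    by_cases h2 : x ≤ p₂
    · rw [if_pos h2]
      have hpp : p₁ < p₂ := lt_of_lt_of_le h1 h2
      have hqq : q₁ < q₂ := lt_of_le_of_ne H.hq12 (fun he => (ne_of_lt hpp) (H.e12.mpr he))
      have hs : 0 < (q₂ - q₁) / (p₂ - p₁) := div_pos (by linarith) (by linarith)
      constructor
      · have hmul : 0 < (q₂ - q₁) / (p₂ - p₁) * (x - p₁) := mul_pos hs (by linarith)
        linarith [H.hq0]
      · have h3 : (q₂ - q₁) / (p₂ - p₁) * (x - p₁) ≤ (q₂ - q₁) / (p₂ - p₁) * (p₂ - p₁) :=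
          mul_le_mul_of_nonneg_left (by linarith) (le_of_lt hs)
        rw [div_mul_cancel₀ _ (ne_of_gt (by linarith : (0:ℝ) < p₂ - p₁))] at h3
        linarith [H.hq1]
    · push_neg at h2
      rw [if_neg (not_le.mpr h2)]
      have hs : 0 < (1 - q₂) / (1 - p₂) := div_pos (by linarith [H.hq1]) (by linarith [H.hp1])
      constructor
      · have hmul : 0 < (1 - q₂) / (1 - p₂) * (x - p₂) := mul_pos hs (by linarith)
        linarith [H.hq0, H.hq12]
      · have h3 : (1 - q₂) / (1 - p₂) * (x - p₂) < (1 - q₂) / (1 - p₂) * (1 - p₂) :=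
          mul_lt_mul_of_pos_left (by linarith) hs
        rw [div_mul_cancel₀ _ (ne_of_gt (by linarith [H.hp1] : (0:ℝ) < 1 - p₂))] at h3
        linarith

lemma pwl_strictMono (H : PwlHyp p₁ p₂ q₁ q₂) {x y : ℝ} (hx0 : 0 ≤ x) (hxy : x < y)
    (hy1 : y < 1) : pwl p₁ p₂ q₁ q₂ x < pwl p₁ p₂ q₁ q₂ y := by
  have hb1 : ∀ z : ℝ, 0 ≤ z → z ≤ p₁ → q₁ / p₁ * z ≤ q₁ := by
    intro z hz0 hz1
    rcases eq_or_lt_of_le H.hp0 with h0 | h0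
    · have : z = 0 := le_antisymm (h0 ▸ hz1) hz0
      subst this
      rw [mul_zero]; exact H.hq0
    · have h2 : q₁ / p₁ * z ≤ q₁ / p₁ * p₁ :=
        mul_le_mul_of_nonneg_left hz1 (div_nonneg H.hq0 (le_of_lt h0))
      rw [div_mul_cancel₀ _ (ne_of_gt h0)] at h2
      exact h2
  unfold pwl
  by_cases hy1' : y ≤ p₁
  · have hx1' : x ≤ p₁ := le_of_lt (lt_of_lt_of_le hxy hy1')
    rw [if_pos hx1', if_pos hy1']
    have hp : 0 < p₁ := lt_of_le_of_lt hx0 (lt_of_lt_of_le hxy hy1')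
    have hq : 0 < q₁ := lt_of_le_of_ne H.hq0 (fun he => (ne_of_gt hp) (H.z1.mpr he.symm))
    exact mul_lt_mul_of_pos_left hxy (div_pos hq hp)
  · push_neg at hy1'
    by_cases hy2' : y ≤ p₂
    · have hpp : p₁ < p₂ := lt_of_lt_of_le hy1' hy2'
      have hqq : q₁ < q₂ := lt_of_le_of_ne H.hq12 (fun he => (ne_of_lt hpp) (H.e12.mpr he))
      have hs : 0 < (q₂ - q₁) / (p₂ - p₁) := div_pos (by linarith) (by linarith)
      rw [if_neg (not_le.mpr hy1'), if_pos hy2']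
      by_cases hx1' : x ≤ p₁
      · rw [if_pos hx1']
        have hxval := hb1 x hx0 hx1'
        have hmul : 0 < (q₂ - q₁) / (p₂ - p₁) * (y - p₁) := mul_pos hs (by linarith)
        linarith
      · push_neg at hx1'
        have hx2' : x ≤ p₂ := le_of_lt (lt_of_lt_of_le hxy hy2')
        rw [if_neg (not_le.mpr hx1'), if_pos hx2']
        have hmul := mul_lt_mul_of_pos_left (show x - p₁ < y - p₁ by linarith) hs
        linarith
    · push_neg at hy2'
      have hs3 : 0 < (1 - q₂) / (1 - p₂) := div_pos (by linarith [H.hq1]) (by linarith [H.hp1])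
      rw [if_neg (not_le.mpr hy1'), if_neg (not_le.mpr hy2')]
      have hyval : q₂ < q₂ + (1 - q₂) / (1 - p₂) * (y - p₂) := by
        have hmul : 0 < (1 - q₂) / (1 - p₂) * (y - p₂) := mul_pos hs3 (by linarith)
        linarith
      by_cases hx1' : x ≤ p₁
      · rw [if_pos hx1']
        have hxval := hb1 x hx0 hx1'
        linarith [H.hq12]
      · push_neg at hx1'
        by_cases hx2' : x ≤ p₂
        · rw [if_neg (not_le.mpr hx1'), if_pos hx2']
          have hpp : p₁ < p₂ := lt_of_lt_of_le hx1' hx2'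
          have hqq : q₁ < q₂ := lt_of_le_of_ne H.hq12 (fun he => (ne_of_lt hpp) (H.e12.mpr he))
          have hs : 0 < (q₂ - q₁) / (p₂ - p₁) := div_pos (by linarith) (by linarith)
          have h3 : (q₂ - q₁) / (p₂ - p₁) * (x - p₁) ≤ (q₂ - q₁) / (p₂ - p₁) * (p₂ - p₁) :=
            mul_le_mul_of_nonneg_left (by linarith) (le_of_lt hs)
          rw [div_mul_cancel₀ _ (ne_of_gt (by linarith : (0:ℝ) < p₂ - p₁))] at h3
          linarith
        · push_neg at hx2'
          rw [if_neg (not_le.mpr hx1'), if_neg (not_le.mpr hx2')]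
          have hmul := mul_lt_mul_of_pos_left (show x - p₂ < y - p₂ by linarith) hs3
          linarith

end PwlHyp

/-! ### Stretch functions from pwl maps -/

noncomputable def stretchOf (p₁ p₂ q₁ q₂ : ℝ) (x : ℝ) : ℝ :=
  (⌊x⌋ : ℝ) + pwl p₁ p₂ q₁ q₂ (Int.fract x)

lemma int_frac_le (D c : ℤ) {u v : ℝ} (hu0 : 0 ≤ u) (hu1 : u < 1) (hv0 : 0 ≤ v) (hv1 : v < 1) :
    ((D : ℝ) + (u - v) ≤ (c : ℝ)) ↔ (D < c ∨ (D = c ∧ u ≤ v)) := by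
  constructor
  · intro h
    by_cases hDc : D < c
    · exact Or.inl hDc
    · right
      have hcD : c ≤ D := not_lt.mp hDc
      have hDc' : D = c := by
        by_contra h2
        have h3 : c < D := lt_of_le_of_ne hcD (Ne.symm h2)
        have h4 : (c : ℝ) + 1 ≤ (D : ℝ) := by exact_mod_cast Int.add_one_le_of_lt h3
        linarith
      refine ⟨hDc', ?_⟩
      rw [hDc'] at h
      linarith
  · rintro (h | ⟨rfl, h⟩)
    · have h4 : (D : ℝ) + 1 ≤ (c : ℝ) := by exact_mod_cast Int.add_one_le_of_lt h
      linarith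
    · linarith

lemma int_frac_lt (D c : ℤ) {u v : ℝ} (hu0 : 0 ≤ u) (hu1 : u < 1) (hv0 : 0 ≤ v) (hv1 : v < 1) :
    ((D : ℝ) + (u - v) < (c : ℝ)) ↔ (D < c ∨ (D = c ∧ u < v)) := by
  constructor
  · intro h
    by_cases hDc : D < c
    · exact Or.inl hDc
    · right
      have hcD : c ≤ D := not_lt.mp hDc
      have hDc' : D = c := by
        by_contra h2
        have h3 : c < D := lt_of_le_of_ne hcD (Ne.symm h2)
        have h4 : (c : ℝ) + 1 ≤ (D : ℝ) := by exact_mod_cast Int.add_one_le_of_lt h3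
        linarith
      refine ⟨hDc', ?_⟩
      rw [hDc'] at h
      linarith
  · rintro (h | ⟨rfl, h⟩)
    · have h4 : (D : ℝ) + 1 ≤ (c : ℝ) := by exact_mod_cast Int.add_one_le_of_lt h
      linarith
    · linarith

lemma zcompat_stretchOf {p₁ p₂ q₁ q₂ : ℝ} (H : PwlHyp p₁ p₂ q₁ q₂) :
    Zcompat (stretchOf p₁ p₂ q₁ q₂) := by
  constructor
  · simp [stretchOf, Int.fract_zero, H.pwl_zero]
  · intro x y c
    set u := Int.fract x with hu
    set v := Int.fract y with hv
    have hu0 : 0 ≤ u := Int.fract_nonneg x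
    have hu1 : u < 1 := Int.fract_lt_one x
    have hv0 : 0 ≤ v := Int.fract_nonneg y
    have hv1 : v < 1 := Int.fract_lt_one y
    have hgu := H.pwl_bounds hu0 hu1
    have hgv := H.pwl_bounds hv0 hv1
    have hle : u ≤ v ↔ pwl p₁ p₂ q₁ q₂ u ≤ pwl p₁ p₂ q₁ q₂ v := by
      constructor
      · intro h
        rcases eq_or_lt_of_le h with h' | h'
        · rw [h']
        · exact le_of_lt (H.pwl_strictMono hu0 h' hv1)
      · intro h
        by_contra hc
        push_neg at hc
        exact absurd h (not_le.mpr (H.pwl_strictMono hv0 hc hu1))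
    have hlt : u < v ↔ pwl p₁ p₂ q₁ q₂ u < pwl p₁ p₂ q₁ q₂ v := by
      constructor
      · intro h; exact H.pwl_strictMono hu0 h hv1
      · intro h
        by_contra hc
        push_neg at hc
        rcases eq_or_lt_of_le hc with h' | h'
        · rw [h'] at h; exact lt_irrefl _ h
        · exact absurd h (not_lt.mpr (le_of_lt (H.pwl_strictMono hv0 h' hu1)))
    have hx : x - y = ((⌊x⌋ - ⌊y⌋ : ℤ) : ℝ) + (u - v) := by
      push_cast
      rw [hu, hv]
      unfold Int.fract
      ring
    have hfx : stretchOf p₁ p₂ q₁ q₂ x - stretchOf p₁ p₂ q₁ q₂ y =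
        ((⌊x⌋ - ⌊y⌋ : ℤ) : ℝ) + (pwl p₁ p₂ q₁ q₂ u - pwl p₁ p₂ q₁ q₂ v) := by
      unfold stretchOf
      push_cast
      rw [← hu, ← hv]
      ring
    constructor
    · rw [hx, hfx, int_frac_le _ c hu0 hu1 hv0 hv1, int_frac_le _ c hgu.1 hgu.2 hgv.1 hgv.2]
      exact or_congr Iff.rfl (and_congr Iff.rfl hle)
    · rw [hx, hfx, int_frac_lt _ c hu0 hu1 hv0 hv1, int_frac_lt _ c hgu.1 hgu.2 hgv.1 hgv.2]
      exact or_congr Iff.rfl (and_congr Iff.rfl hlt)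

lemma PwlHyp.stretchOf_apply₁ {p₁ p₂ q₁ q₂ : ℝ} (H : PwlHyp p₁ p₂ q₁ q₂) {x : ℝ}
    (h : Int.fract x = p₁) : stretchOf p₁ p₂ q₁ q₂ x = x - p₁ + q₁ := by
  unfold stretchOf
  rw [h, H.pwl_p1]
  have h2 : (⌊x⌋ : ℝ) = x - p₁ := by rw [← h]; exact (Int.self_sub_fract x).symm
  rw [h2]

lemma PwlHyp.stretchOf_apply₂ {p₁ p₂ q₁ q₂ : ℝ} (H : PwlHyp p₁ p₂ q₁ q₂) {x : ℝ}
    (h : Int.fract x = p₂) : stretchOf p₁ p₂ q₁ q₂ x = x - p₂ + q₂ := by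
  unfold stretchOf
  rw [h, H.pwl_p2]
  have h2 : (⌊x⌋ : ℝ) = x - p₂ := by rw [← h]; exact (Int.self_sub_fract x).symm
  rw [h2]

/-! ### Fractional decomposition of durations -/

lemma frac_decomp {t d : ℝ} {n : ℤ} (hl : (n : ℝ) < d) (hr : d < (n : ℝ) + 1) :
    (Int.fract (t - d) < Int.fract t → d = (n : ℝ) + (Int.fract t - Int.fract (t - d))) ∧
    (Int.fract t < Int.fract (t - d) → d = (n : ℝ) + 1 + (Int.fract t - Int.fract (t - d))) ∧
    Int.fract (t - d) ≠ Int.fract t := by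
  have hd' : d = ((⌊t⌋ - ⌊t - d⌋ : ℤ) : ℝ) + (Int.fract t - Int.fract (t - d)) := by
    unfold Int.fract
    push_cast
    ring
  set b := Int.fract t
  set a := Int.fract (t - d)
  set K : ℤ := ⌊t⌋ - ⌊t - d⌋ with hK
  have hd : d = (K : ℝ) + (b - a) := hd'
  have ha0 : 0 ≤ a := Int.fract_nonneg _
  have ha1 : a < 1 := Int.fract_lt_one _
  have hb0 : 0 ≤ b := Int.fract_nonneg _
  have hb1 : b < 1 := Int.fract_lt_one _
  refine ⟨?_, ?_, ?_⟩
  · intro hab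
    have h1 : (n : ℝ) - 1 < (K : ℝ) := by linarith
    have h2 : (K : ℝ) < (n : ℝ) + 1 := by linarith
    have : K = n := by
      have h1' : n - 1 < K := by exact_mod_cast h1
      have h2' : K < n + 1 := by exact_mod_cast h2
      omega
    rw [this] at hd
    linarith
  · intro hba
    have h1 : (n : ℝ) < (K : ℝ) := by linarith
    have h2 : (K : ℝ) < (n : ℝ) + 2 := by linarith
    have : K = n + 1 := by
      have h1' : n < K := by exact_mod_cast h1
      have h2' : K < n + 2 := by exact_mod_cast h2
      omega
    rw [this] at hd
    push_cast at hd ⊢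
    linarith
  · intro hab
    rw [hab] at hd
    have : d = (K : ℝ) := by linarith
    rw [this] at hl hr
    have h1' : n < K := by exact_mod_cast hl
    have h2' : K < n + 1 := by exact_mod_cast hr
    omega

/-! ### The main argument -/

lemma weak_mono (A : RTA) (hA : IntRTA A) (n : ℕ) (Δ₁ Δ₂ : ℝ)
    (h1l : (n : ℝ) < Δ₁) (h1r : Δ₁ < (n : ℝ) + 1) (h2l : (n : ℝ) < Δ₂) (h2r : Δ₂ < (n : ℝ) + 1)
    (H : A.WeaklyOpaque (ENNReal.ofReal Δ₁)) : A.WeaklyOpaque (ENNReal.ofReal Δ₂) := by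
  rintro τ ⟨ρ, hρ, hdle, rfl⟩
  have hn0 : (0 : ℝ) ≤ (n : ℝ) := Nat.cast_nonneg n
  have hΔ₂0 : 0 ≤ Δ₂ := le_of_lt (lt_of_le_of_lt hn0 h2l)
  have hΔ₁0 : 0 ≤ Δ₁ := le_of_lt (lt_of_le_of_lt hn0 h1l)
  set t := runDur ρ with ht
  set d := A.durPriv ρ with hdd
  have hd : d ≤ Δ₂ := (ENNReal.ofReal_le_ofReal_iff hΔ₂0).mp hdle
  set b := Int.fract t with hb
  have hb0 : 0 ≤ b := Int.fract_nonneg t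
  have hb1 : b < 1 := Int.fract_lt_one t
  set β : ℝ := (min Δ₁ Δ₂ - n) / 4 with hβ
  have hβpos : 0 < β := by
    rw [hβ]
    have : (n : ℝ) < min Δ₁ Δ₂ := lt_min h1l h2l
    linarith
  have hβ4 : 4 * β ≤ Δ₁ - n := by
    rw [hβ]
    have : min Δ₁ Δ₂ ≤ Δ₁ := min_le_left _ _
    linarith
  have hβlt : β < 1 / 4 := by
    rw [hβ]
    have h' : min Δ₁ Δ₂ < (n : ℝ) + 1 := lt_of_le_of_lt (min_le_left _ _) h1r
    linarith
  set b₁ : ℝ := if b = 0 then 0 else β with hb₁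
  have hb₁0 : 0 ≤ b₁ := by rw [hb₁]; split_ifs <;> linarith
  have hb₁1 : b₁ < 1 := by rw [hb₁]; split_ifs <;> linarith
  have hb₁β : b₁ ≤ β := by rw [hb₁]; split_ifs <;> linarith
  have hb₁z : b = 0 ↔ b₁ = 0 := by
    rw [hb₁]
    constructor
    · intro h; simp [h]
    · intro h
      by_contra hc
      rw [if_neg hc] at h
      exact absurd h (ne_of_gt hβpos)
  -- Step 1: construct a stretch f₁ with f₁ t = t - b + b₁ and d₁ ≤ Δ₁
  have step1 : ∃ f₁ : ℝ → ℝ, Zcompat f₁ ∧ f₁ t = t - b + b₁ ∧ f₁ t - f₁ (t - d) ≤ Δ₁ := by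
    by_cases hdn : d ≤ (n : ℝ)
    · -- use the one-point stretch b ↦ b₁
      have Hp : PwlHyp b b b₁ b₁ :=
        ⟨hb0, le_refl b, hb1, hb₁0, le_refl b₁, hb₁1, hb₁z, ⟨fun _ => rfl, fun _ => rfl⟩⟩
      refine ⟨stretchOf b b b₁ b₁, zcompat_stretchOf Hp, Hp.stretchOf_apply₁ rfl, ?_⟩
      have := ((zcompat_stretchOf Hp).2 t (t - d) (n : ℤ)).1
      push_cast at this
      have h' := this.mp (by linarith)
      linarith
    · push_neg at hdn
      have hdn1 : d < (n : ℝ) + 1 := lt_of_le_of_lt hd h2r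
      set a := Int.fract (t - d) with ha
      have ha0 : 0 ≤ a := Int.fract_nonneg _
      have ha1 : a < 1 := Int.fract_lt_one _
      have hdec := frac_decomp (t := t) (d := d) (n := (n : ℤ)) (by push_cast; exact hdn)
        (by push_cast; exact hdn1)
      rw [← ha, ← hb] at hdec
      push_cast at hdec
      rcases lt_trichotomy a b with hab | hab | hab
      · -- a < b, so b > 0, b₁ = β
        have hbpos : 0 < b := lt_of_le_of_lt ha0 hab
        have hb₁val : b₁ = β := by rw [hb₁, if_neg (ne_of_gt hbpos)]
        have hdval : d = (n : ℝ) + (b - a) := hdec.1 hab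
        set a₁ : ℝ := if a = 0 then 0 else β / 2 with ha₁
        have ha₁0 : 0 ≤ a₁ := by rw [ha₁]; split_ifs <;> linarith
        have ha₁β : a₁ < β := by rw [ha₁]; split_ifs <;> linarith
        have ha₁z : a = 0 ↔ a₁ = 0 := by
          rw [ha₁]
          constructor
          · intro h; simp [h]
          · intro h
            by_contra hc
            rw [if_neg hc] at h
            linarith
        have Hp : PwlHyp a b a₁ β :=
          ⟨ha0, le_of_lt hab, hb1, ha₁0, le_of_lt ha₁β, by linarith, ha₁z,
            ⟨fun he => absurd he (ne_of_lt hab), fun he => absurd he (ne_of_lt ha₁β)⟩⟩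
        refine ⟨stretchOf a b a₁ β, zcompat_stretchOf Hp, ?_, ?_⟩
        · rw [hb₁val, Hp.stretchOf_apply₂ rfl]
        · rw [Hp.stretchOf_apply₂ rfl, Hp.stretchOf_apply₁ rfl]
          have : t - b + β - (t - d - a + a₁) = (n : ℝ) + β - a₁ := by
            rw [hdval]; ring
          rw [this]
          linarith
      · exact absurd hab hdec.2.2
      · -- b < a, so a > 0
        have hdval : d = (n : ℝ) + 1 + (b - a) := hdec.2.1 hab
        set a₁ : ℝ := 1 - β / 2 with ha₁
        have hb₁a₁ : b₁ < a₁ := by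
          rw [ha₁]
          have : b₁ ≤ β := hb₁β
          linarith
        have Hp : PwlHyp b a b₁ a₁ :=
          ⟨hb0, le_of_lt hab, ha1, hb₁0, le_of_lt hb₁a₁, by rw [ha₁]; linarith, hb₁z,
            ⟨fun he => absurd he (ne_of_lt hab), fun he => absurd he (ne_of_lt hb₁a₁)⟩⟩
        refine ⟨stretchOf b a b₁ a₁, zcompat_stretchOf Hp, Hp.stretchOf_apply₁ rfl, ?_⟩
        rw [Hp.stretchOf_apply₁ rfl, Hp.stretchOf_apply₂ rfl]
        have : t - b + b₁ - (t - d - a + a₁) = (n : ℝ) + 1 + b₁ - a₁ := by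
          rw [hdval]; ring
        rw [this, ha₁]
        have h3 : b₁ ≤ β := hb₁β
        linarith
  obtain ⟨f₁, hf₁, hft, hd₁⟩ := step1
  -- the stretched run
  obtain ⟨hrun₁, hdur₁, hdp₁⟩ := isRun_stretch A hA f₁ hf₁ ρ hρ.1.1
  have hpriv₁ : A.IsPrivateRun (stretchRun f₁ 0 ρ) := isPrivate_stretch A hA f₁ hf₁ ρ hρ
  set t₁ := t - b + b₁ with ht₁
  have hdur₁' : runDur (stretchRun f₁ 0 ρ) = t₁ := by rw [hdur₁, ← ht, hft]
  have hdp₁' : A.durPriv (stretchRun f₁ 0 ρ) ≤ Δ₁ := by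
    rw [hdp₁, ← ht, ← hdd]
    exact hd₁
  have hmem₁ : t₁ ∈ A.DVisitLE (ENNReal.ofReal Δ₁) :=
    ⟨stretchRun f₁ 0 ρ, hpriv₁, ENNReal.ofReal_le_ofReal hdp₁', hdur₁'⟩
  have hfract₁ : Int.fract t₁ = b₁ := by
    rw [ht₁]
    have h2 : t - b + b₁ = (⌊t⌋ : ℝ) + b₁ := by
      rw [hb, Int.self_sub_fract t]
    rw [h2, Int.fract_intCast_add, Int.fract_eq_self.mpr ⟨hb₁0, hb₁1⟩]
  -- the "return" one-point stretch b₁ ↦ b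
  have Hp₀ : PwlHyp b₁ b₁ b b :=
    ⟨hb₁0, le_refl _, hb₁1, hb0, le_refl _, hb1, hb₁z.symm, ⟨fun _ => rfl, fun _ => rfl⟩⟩
  have hf₀ := zcompat_stretchOf Hp₀
  have hf₀t₁ : stretchOf b₁ b₁ b b t₁ = t := by
    rw [Hp₀.stretchOf_apply₁ hfract₁, ht₁]; ring
  rcases H hmem₁ with hgt | hpub
  · -- t₁ ∈ DVisitGT Δ₁
    obtain ⟨σ, hσ, hσgt, hσdur⟩ := hgt
    have hd₂ : Δ₁ < A.durPriv σ := by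
      by_contra hc
      push_neg at hc
      exact absurd (ENNReal.ofReal_le_ofReal hc) (not_le.mpr hσgt)
    set d₂ := A.durPriv σ with hd₂d
    by_cases hcase : d₂ < (n : ℝ) + 1
    · -- d₂ ∈ (n, n+1): stretch with a two-point map
      have hd₂n : (n : ℝ) < d₂ := lt_trans h1l hd₂
      set a₂ := Int.fract (t₁ - d₂) with ha₂
      have ha₂0 : 0 ≤ a₂ := Int.fract_nonneg _
      have ha₂1 : a₂ < 1 := Int.fract_lt_one _
      have hdec := frac_decomp (t := t₁) (d := d₂) (n := (n : ℤ)) (by push_cast; exact hd₂n)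
        (by push_cast; exact hcase)
      rw [← ha₂, hfract₁] at hdec
      push_cast at hdec
      have hb₁a₂ : b₁ < a₂ := by
        rcases lt_trichotomy a₂ b₁ with h' | h' | h'
        · exfalso
          have heq := hdec.1 h'
          have hle : d₂ ≤ (n : ℝ) + β := by
            rw [heq]
            linarith [hb₁β]
          linarith
        · exact absurd h' hdec.2.2
        · exact h'
      have hd₂val : d₂ = (n : ℝ) + 1 + (b₁ - a₂) := hdec.2.1 hb₁a₂
      set ε₀ := (n : ℝ) + 1 - Δ₂ with hε₀
      have hε₀pos : 0 < ε₀ := by rw [hε₀]; linarith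
      set a₃ := b + min ε₀ (1 - b) / 2 with ha₃
      have ha₃b : b < a₃ := by
        rw [ha₃]
        have : 0 < min ε₀ (1 - b) := lt_min hε₀pos (by linarith)
        linarith
      have ha₃1 : a₃ < 1 := by
        rw [ha₃]
        have : min ε₀ (1 - b) ≤ 1 - b := min_le_right _ _
        linarith
      have Hp : PwlHyp b₁ a₂ b a₃ :=
        ⟨hb₁0, le_of_lt hb₁a₂, ha₂1, hb0, le_of_lt ha₃b, ha₃1, hb₁z.symm,
          ⟨fun he => absurd he (ne_of_lt hb₁a₂), fun he => absurd he (ne_of_lt ha₃b)⟩⟩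
      have hf := zcompat_stretchOf Hp
      obtain ⟨hrunσ, hdurσ, hdpσ⟩ := isRun_stretch A hA _ hf σ hσ.1.1
      have hprivσ : A.IsPrivateRun (stretchRun (stretchOf b₁ a₂ b a₃) 0 σ) :=
        isPrivate_stretch A hA _ hf σ hσ
      have hval_t₁ : stretchOf b₁ a₂ b a₃ t₁ = t := by
        rw [Hp.stretchOf_apply₁ hfract₁, ht₁]; ring
      have hval_tk : stretchOf b₁ a₂ b a₃ (t₁ - d₂) = t₁ - d₂ - a₂ + a₃ :=
        Hp.stretchOf_apply₂ rfl
      have hdurσ' : runDur (stretchRun (stretchOf b₁ a₂ b a₃) 0 σ) = t := by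
        rw [hdurσ, hσdur, hval_t₁]
      have hd₃ : A.durPriv (stretchRun (stretchOf b₁ a₂ b a₃) 0 σ) = (n : ℝ) + 1 + b - a₃ := by
        rw [hdpσ, hσdur, ← hd₂d, hval_t₁, hval_tk, ht₁, hd₂val]
        ring
      have hd₃gt : Δ₂ < A.durPriv (stretchRun (stretchOf b₁ a₂ b a₃) 0 σ) := by
        rw [hd₃, ha₃]
        have : min ε₀ (1 - b) ≤ ε₀ := min_le_left _ _
        rw [hε₀] at this ⊢
        linarith [hε₀pos]
      refine Set.mem_union_left _ ⟨stretchRun (stretchOf b₁ a₂ b a₃) 0 σ, hprivσ, ?_, hdurσ'⟩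
      rw [ENNReal.ofReal_lt_ofReal_iff (lt_of_le_of_lt hΔ₂0 hd₃gt)]
      exact hd₃gt
    · -- d₂ ≥ n+1: return with the one-point stretch
      push_neg at hcase
      obtain ⟨hrunσ, hdurσ, hdpσ⟩ := isRun_stretch A hA _ hf₀ σ hσ.1.1
      have hprivσ : A.IsPrivateRun (stretchRun (stretchOf b₁ b₁ b b) 0 σ) :=
        isPrivate_stretch A hA _ hf₀ σ hσ
      have hdurσ' : runDur (stretchRun (stretchOf b₁ b₁ b b) 0 σ) = t := by
        rw [hdurσ, hσdur, hf₀t₁]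
      have hd₃ge : ((n : ℝ) + 1) ≤ A.durPriv (stretchRun (stretchOf b₁ b₁ b b) 0 σ) := by
        rw [hdpσ, hσdur, ← hd₂d]
        have hkey := (hf₀.2 t₁ (t₁ - d₂) ((n : ℤ) + 1)).2
        push_cast at hkey
        by_contra hc
        push_neg at hc
        have := hkey.mpr (by linarith)
        linarith
      have hd₃gt : Δ₂ < A.durPriv (stretchRun (stretchOf b₁ b₁ b b) 0 σ) :=
        lt_of_lt_of_le h2r hd₃ge
      refine Set.mem_union_left _ ⟨stretchRun (stretchOf b₁ b₁ b b) 0 σ, hprivσ, ?_, hdurσ'⟩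
      rw [ENNReal.ofReal_lt_ofReal_iff (lt_of_le_of_lt hΔ₂0 hd₃gt)]
      exact hd₃gt
  · -- t₁ ∈ DPub
    obtain ⟨σ, hσ, hσdur⟩ := hpub
    obtain ⟨hrunσ, hdurσ, _⟩ := isRun_stretch A hA _ hf₀ σ hσ.1.1
    refine Set.mem_union_right _ ⟨stretchRun (stretchOf b₁ b₁ b b) 0 σ,
      isPublic_stretch A hA _ hf₀ σ hσ, ?_⟩
    rw [hdurσ, hσdur, hf₀t₁]

/-- Theorem 5, weak case: for every timed automaton `A` with integer
constants and every non-integer bound `Δ ∈ ℝ≥0 \ ℕ`, the automaton `A` is weakly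
Δ-ET-opaque iff it is weakly (⌊Δ⌋ + 1/2)-ET-opaque. -/
theorem weak_opacity_half (A : TAData) (Δ : ℝ) (h0 : 0 ≤ Δ) (hni : ∀ n : ℕ, Δ ≠ (n : ℝ)) :
    A.toRTA.WeaklyOpaque (ENNReal.ofReal Δ) ↔
      A.toRTA.WeaklyOpaque (ENNReal.ofReal ((⌊Δ⌋₊ : ℝ) + 1 / 2)) := by
  have hA := intRTA_toRTA A
  set n := ⌊Δ⌋₊ with hn
  have hfl : (n : ℝ) ≤ Δ := Nat.floor_le h0
  have hl : (n : ℝ) < Δ := lt_of_le_of_ne hfl (Ne.symm (hni n))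
  have hr : Δ < (n : ℝ) + 1 := by
    have := Nat.lt_floor_add_one Δ
    push_cast at this
    exact_mod_cast this
  have h2l : (n : ℝ) < (n : ℝ) + 1 / 2 := by linarith
  have h2r : (n : ℝ) + 1 / 2 < (n : ℝ) + 1 := by linarith
  constructor
  · exact weak_mono A.toRTA hA n Δ ((n : ℝ) + 1 / 2) hl hr h2l h2r
  · exact weak_mono A.toRTA hA n ((n : ℝ) + 1 / 2) Δ h2l h2r hl hr
end

section
/- For every timed automaton A with integer constants and every non-integer bound Δ ∈ ℝ≥0 \ ℕ, the automaton A is fully Δ-ET-opaque if and only if A is fully (⌊Δ⌋ + 1/2)-ET-opaque. -/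
/-!
Units of `CircleDeg1Lift` are the increasing bijections `F` of `ℝ` with `F (x + 1) = F x + 1`.
Such an `F` preserves every comparison of a clock value with an integer, because
`F s - F r ⋈ k ↔ s - r ⋈ k`. Re-timing a run by `F` (the event at absolute time `t` moves to
`F t`) therefore gives a run of any timed automaton with integer constants through the same
locations; if `F 0 = 0`, a run of duration `T` becomes one of duration `F T`, and its last stay
since entering the private location lasts `F T - F (T - dur_priv)` instead of `dur_priv`.

For `δ, d ∈ (0, 1)` and a duration `T`, a piecewise-linear `F` with `F T - F (T - δ) = d` exists, so
membership of `T` in `DVisit≤(n + δ)`, `DVisit>(n + δ)` and `DPub` is equivalent to membership of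
`F T` in `DVisit≤(n + d)`, `DVisit>(n + d)` and `DPub`. Hence full `(n + δ)`- and
`(n + d)`-ET-opacity are equivalent; take `d = 1/2`.
-/

open scoped ENNReal

open Set

/-- The piecewise-linear bijection through `(0, 0)`, `(δ, d)` and `(1, 1)`. -/
noncomputable def bend (δ d t : ℝ) : ℝ :=
  if t ≤ δ then d / δ * t else d + (1 - d) / (1 - δ) * (t - δ)

section Bend

variable {δ d : ℝ}

lemma bend_zero (hδ : 0 ≤ δ) : bend δ d 0 = 0 := by
  simp [bend, hδ]

lemma bend_self (hδ : δ ≠ 0) : bend δ d δ = d := by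
  simp [bend, hδ]

lemma bend_one (hδ : δ < 1) : bend δ d 1 = 1 := by
  rw [bend, if_neg hδ.not_ge]
  field_simp [(sub_pos.2 hδ).ne']
  ring

lemma bend_strictMono (hδ : δ ∈ Ioo 0 1) (hd : d ∈ Ioo 0 1) : StrictMono (bend δ d) := by
  obtain ⟨hδ0, hδ1⟩ := hδ
  obtain ⟨hd0, hd1⟩ := hd
  have hs₁ : 0 < d / δ := div_pos hd0 hδ0
  have hs₂ : 0 < (1 - d) / (1 - δ) := div_pos (by linarith) (by linarith)
  intro x y hxy
  unfold bend
  split_ifs with hx hy hy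
  · exact mul_lt_mul_of_pos_left hxy hs₁
  · have : d / δ * x ≤ d / δ * δ := mul_le_mul_of_nonneg_left hx hs₁.le
    rw [div_mul_cancel₀ _ hδ0.ne'] at this
    nlinarith [mul_pos hs₂ (sub_pos.2 (lt_of_not_ge hy))]
  · exact absurd (hxy.le.trans hy) hx
  · nlinarith [mul_lt_mul_of_pos_left hxy hs₂]

lemma bend_bend (hδ : δ ∈ Ioo 0 1) (hd : d ∈ Ioo 0 1) (t : ℝ) : bend δ d (bend d δ t) = t := by
  obtain ⟨hδ0, hδ1⟩ := hδ
  obtain ⟨hd0, hd1⟩ := hd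
  have hδ1' : 1 - δ ≠ 0 := (sub_pos.2 hδ1).ne'
  have hd1' : 1 - d ≠ 0 := (sub_pos.2 hd1).ne'
  by_cases ht : t ≤ d
  · have hle : δ / d * t ≤ δ := by
      rw [div_mul_eq_mul_div, div_le_iff₀ hd0]; exact mul_le_mul_of_nonneg_left ht hδ0.le
    have hb : bend d δ t = δ / d * t := if_pos ht
    rw [hb, bend, if_pos hle]
    field_simp
  · have hgt : ¬ δ + (1 - δ) / (1 - d) * (t - d) ≤ δ := by
      have : 0 < (1 - δ) / (1 - d) * (t - d) :=
        mul_pos (div_pos (by linarith) (by linarith)) (by linarith)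
      linarith
    have hb : bend d δ t = δ + (1 - δ) / (1 - d) * (t - d) := if_neg ht
    rw [hb, bend, if_neg hgt]
    field_simp
    ring

noncomputable def bendIso (hδ : δ ∈ Ioo 0 1) (hd : d ∈ Ioo 0 1) : ℝ ≃o ℝ :=
  (bend_strictMono hδ hd).orderIsoOfRightInverse _ (bend d δ) (bend_bend hδ hd)

end Bend

lemma OrderIso.apply_mem_Ico_zero_one (h : ℝ ≃o ℝ) (h0 : h 0 = 0) (h1 : h 1 = 1) {x : ℝ}
    (hx : x ∈ Ico 0 1) : h x ∈ Ico (0 : ℝ) 1 :=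
  ⟨h0 ▸ h.monotone hx.1, h1 ▸ h.strictMono hx.2⟩

namespace CircleDeg1Lift

noncomputable def ofOrderIso (h : ℝ ≃o ℝ) (h0 : h 0 = 0) (h1 : h 1 = 1) : CircleDeg1Lift where
  toFun x := ⌊x⌋ + h (Int.fract x)
  monotone' x y hxy := by
    have hfract (z : ℝ) := h.apply_mem_Ico_zero_one h0 h1 ⟨Int.fract_nonneg z, Int.fract_lt_one z⟩
    rcases (Int.floor_mono hxy).lt_or_eq with hlt | heq
    · have : (⌊x⌋ : ℝ) + 1 ≤ ⌊y⌋ := by exact_mod_cast hlt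
      linarith [(hfract x).2, (hfract y).1]
    · have : Int.fract x ≤ Int.fract y := by rw [Int.fract, Int.fract, heq]; linarith
      simpa only [heq, add_le_add_iff_left] using h.monotone this
  map_add_one' x := by
    simp only [Int.floor_add_one, Int.fract_add_one, Int.cast_add, Int.cast_one]
    ring

lemma ofOrderIso_apply (h : ℝ ≃o ℝ) (h0 : h 0 = 0) (h1 : h 1 = 1) (x : ℝ) :
    ofOrderIso h h0 h1 x = ⌊x⌋ + h (Int.fract x) := rfl

lemma ofOrderIso_apply_of_mem_Ico (h : ℝ ≃o ℝ) (h0 : h 0 = 0) (h1 : h 1 = 1) {x : ℝ}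
    (hx : x ∈ Ico 0 1) : ofOrderIso h h0 h1 x = h x := by
  rw [ofOrderIso_apply, Int.floor_eq_zero_iff.2 hx, Int.fract_eq_self.2 hx, Int.cast_zero, zero_add]

lemma ofOrderIso_apply_ofOrderIso_symm (h : ℝ ≃o ℝ) (h0 : h 0 = 0) (h1 : h 1 = 1)
    (h0' : h.symm 0 = 0) (h1' : h.symm 1 = 1) (y : ℝ) :
    ofOrderIso h h0 h1 (ofOrderIso h.symm h0' h1' y) = y := by
  have hu := h.symm.apply_mem_Ico_zero_one h0' h1' ⟨Int.fract_nonneg y, Int.fract_lt_one y⟩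
  rw [ofOrderIso_apply h.symm, map_int_add, ofOrderIso_apply_of_mem_Ico h h0 h1 hu,
    OrderIso.apply_symm_apply, Int.floor_add_fract]

noncomputable def unitsOfOrderIso (h : ℝ ≃o ℝ) (h0 : h 0 = 0) (h1 : h 1 = 1) : CircleDeg1Liftˣ :=
  have h0' : h.symm 0 = 0 := h.symm_apply_eq.2 h0.symm
  have h1' : h.symm 1 = 1 := h.symm_apply_eq.2 h1.symm
  { val := ofOrderIso h h0 h1
    inv := ofOrderIso h.symm h0' h1'
    val_inv := ext fun y => ofOrderIso_apply_ofOrderIso_symm h h0 h1 h0' h1' y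
    inv_val := ext fun y => by
      simpa using ofOrderIso_apply_ofOrderIso_symm h.symm h0' h1' h0 h1 y }

lemma unitsOfOrderIso_apply_of_mem_Ico (h : ℝ ≃o ℝ) (h0 : h 0 = 0) (h1 : h 1 = 1) {x : ℝ}
    (hx : x ∈ Ico 0 1) : unitsOfOrderIso h h0 h1 x = h x :=
  ofOrderIso_apply_of_mem_Ico h h0 h1 hx

lemma units_strictMono (e : CircleDeg1Liftˣ) : StrictMono e :=
  (toOrderIso e).strictMono

lemma cmp_units_sub_intCast (e : CircleDeg1Liftˣ) (a b : ℝ) (k : ℤ) :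
    cmp (e a - e b) k = cmp (a - b) k := by
  rw [← cmp_sub_zero (e a - e b), sub_sub, cmp_sub_zero, ← map_add_int,
    (units_strictMono e).cmp_map_eq, ← cmp_sub_zero, ← sub_sub, cmp_sub_zero]

lemma units_inv_map_zero {e : CircleDeg1Liftˣ} (he : e 0 = 0) : e⁻¹ 0 = 0 :=
  (units_strictMono e).injective (by rw [units_apply_inv_apply, he])

lemma iff_map_of_forall_units_imp {P : ℝ → ℝ → Prop}
    (hP : ∀ e : CircleDeg1Liftˣ, e 0 = 0 → ∀ T γ, 0 ≤ γ → P T γ → P (e T) (e T - e (T - γ)))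
    {e : CircleDeg1Liftˣ} (he : e 0 = 0) {T γ : ℝ} (hγ : 0 ≤ γ) :
    P T γ ↔ P (e T) (e T - e (T - γ)) := by
  refine ⟨hP e he T γ hγ, fun h => ?_⟩
  have hγ' : 0 ≤ e T - e (T - γ) :=
    sub_nonneg.2 ((units_strictMono e).monotone (by linarith))
  have := hP e⁻¹ (units_inv_map_zero he) _ _ hγ' h
  rwa [units_inv_apply_apply, sub_sub_cancel, units_inv_apply_apply, sub_sub_cancel] at this

lemma exists_units_map_zero_map_eq {δ d : ℝ} (hδ : δ ∈ Ioo 0 1) (hd : d ∈ Ioo 0 1) :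
    ∃ φ : CircleDeg1Liftˣ, φ 0 = 0 ∧ φ δ = d :=
  ⟨unitsOfOrderIso (bendIso hδ hd) (bend_zero hδ.1.le) (bend_one hδ.2),
    (unitsOfOrderIso_apply_of_mem_Ico _ _ _ ⟨le_rfl, one_pos⟩).trans (bend_zero hδ.1.le),
    (unitsOfOrderIso_apply_of_mem_Ico _ _ _ (Ioo_subset_Ico_self hδ)).trans (bend_self hδ.1.ne')⟩

lemma exists_units_map_zero_sub_eq {δ d : ℝ} (hδ : δ ∈ Ioo 0 1) (hd : d ∈ Ioo 0 1) (T : ℝ) :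
    ∃ e : CircleDeg1Liftˣ, e 0 = 0 ∧ e T - e (T - δ) = d := by
  obtain ⟨φ, hφ0, hφδ⟩ := exists_units_map_zero_map_eq hδ hd
  -- `φ` conjugated by the translation taking `T - δ` to `0`, then shifted to fix `0`
  let e₀ := φ * translate (Multiplicative.ofAdd (δ - T))
  refine ⟨translate (Multiplicative.ofAdd (-e₀ 0)) * e₀, ?_, ?_⟩ <;>
    simp only [e₀, Units.val_mul, mul_apply, translate_apply]
  · ring
  · rw [show δ - T + T = δ by ring, show δ - T + (T - δ) = 0 by ring, hφδ, hφ0]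
    ring

end CircleDeg1Lift

lemma satC_congr {μ μ' : ℕ → ℝ} {c : RConstraint} (h : cmp (μ' c.1) c.2.2 = cmp (μ c.1) c.2.2) :
    satC μ' c ↔ satC μ c := by
  obtain ⟨i, op, K⟩ := c
  have hlt : μ' i < K ↔ μ i < K := by rw [← cmp_eq_lt_iff, h, cmp_eq_lt_iff]
  have hgt : K < μ' i ↔ K < μ i := by rw [← cmp_eq_gt_iff, h, cmp_eq_gt_iff]
  have heq : μ' i = K ↔ μ i = K := by rw [← cmp_eq_eq_iff, h, cmp_eq_eq_iff]
  rcases op with _ | _ | _ | _ | _ <;> simp only [satC, ← not_lt, hlt, hgt, heq]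

lemma satG_congr {μ μ' : ℕ → ℝ} {g : RGuard}
    (h : ∀ c ∈ g, cmp (μ' c.1) c.2.2 = cmp (μ c.1) c.2.2) : satG μ' g ↔ satG μ g :=
  forall₂_congr fun c hc => satC_congr (h c hc)

def IsIntGuard (g : RGuard) : Prop := ∀ c ∈ g, ∃ k : ℤ, c.2.2 = k

def RTA.HasIntConstants (B : RTA) : Prop :=
  (∀ ℓ, IsIntGuard (B.inv ℓ)) ∧ ∀ e ∈ B.edges, IsIntGuard e.2.1

lemma TAData.toRTA_hasIntConstants (A : TAData) : A.toRTA.HasIntConstants := by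
  refine ⟨fun ℓ c hc => ?_, fun e he c hc => ?_⟩
  · obtain ⟨c, -, rfl⟩ := List.mem_map.1 hc
    exact ⟨c.2.2, rfl⟩
  · obtain ⟨e, -, rfl⟩ := List.mem_map.1 he
    obtain ⟨c, -, rfl⟩ := List.mem_map.1 hc
    exact ⟨c.2.2, rfl⟩

/-- `s - μ x` is the absolute time of the last reset of `x`; re-timing moves it to
`F (s - μ x)` and the current time `s` to `F s`. -/
def retimeVal (F : ℝ → ℝ) (s : ℝ) (μ : ℕ → ℝ) : ℕ → ℝ := fun x => F s - F (s - μ x)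

def retimeRun (F : ℝ → ℝ) : ℝ → List (ℝ × REdge) → List (ℝ × REdge)
  | _, [] => []
  | s, (d, e) :: ρ => (F (s + d) - F s, e) :: retimeRun F (s + d) ρ

lemma satG_retimeVal_iff (e : CircleDeg1Liftˣ) {g : RGuard} (hg : IsIntGuard g) (s : ℝ)
    (μ : ℕ → ℝ) : satG (retimeVal e s μ) g ↔ satG μ g :=
  satG_congr fun c hc => by
    obtain ⟨k, hk⟩ := hg c hc
    rw [hk, retimeVal, CircleDeg1Lift.cmp_units_sub_intCast, sub_sub_cancel]

lemma delayVal_retimeVal (F : ℝ → ℝ) (s t : ℝ) (μ : ℕ → ℝ) :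
    delayVal (retimeVal F s μ) (F (s + t) - F s) = retimeVal F (s + t) (delayVal μ t) := by
  funext x
  simp only [delayVal, retimeVal, show s + t - (μ x + t) = s - μ x by ring]
  ring

lemma resetVal_retimeVal (F : ℝ → ℝ) (s : ℝ) (μ : ℕ → ℝ) (R : List ℕ) :
    resetVal (retimeVal F s μ) R = retimeVal F s (resetVal μ R) := by
  funext x
  by_cases hx : x ∈ R <;> simp [resetVal, retimeVal, hx]

lemma RTA.HasIntConstants.isRunFrom_retimeRun {B : RTA} (hB : B.HasIntConstants)
    (e : CircleDeg1Liftˣ) {ℓ : ℕ} {s : ℝ} {μ : ℕ → ℝ} {ρ : List (ℝ × REdge)}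
    (h : B.IsRunFrom ℓ μ ρ) : B.IsRunFrom ℓ (retimeVal e s μ) (retimeRun e s ρ) := by
  induction ρ generalizing ℓ s μ with
  | nil => trivial
  | cons q ρ ih =>
    obtain ⟨d, edge⟩ := q
    obtain ⟨hd, hmem, hsrc, hinv, hguard, hinv', hrest⟩ := h
    have hmono {a b : ℝ} : e a ≤ e b ↔ a ≤ b := (CircleDeg1Lift.units_strictMono e).le_iff_le
    refine ⟨sub_nonneg.2 (hmono.2 (le_add_of_nonneg_right hd)), hmem, hsrc, fun t ht0 htd => ?_,
      ?_, ?_, ?_⟩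
    · -- `e` is onto, so `t` is the retimed image of a delay `t' ∈ [0, d]` of the original run
      set t' := e⁻¹ (e s + t) - s
      have ht : t = e (s + t') - e s := by
        rw [add_sub_cancel, CircleDeg1Lift.units_apply_inv_apply]; ring
      rw [ht, delayVal_retimeVal, satG_retimeVal_iff e (hB.1 ℓ)]
      rw [ht, sub_nonneg, hmono, le_add_iff_nonneg_right] at ht0
      rw [ht, sub_le_sub_iff_right, hmono, add_le_add_iff_left] at htd
      exact hinv t' ht0 htd
    · rw [delayVal_retimeVal, satG_retimeVal_iff e (hB.2 edge hmem)]
      exact hguard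
    · rw [delayVal_retimeVal, resetVal_retimeVal, satG_retimeVal_iff e (hB.1 _)]
      exact hinv'
    · rw [delayVal_retimeVal, resetVal_retimeVal]
      exact ih hrest

lemma RTA.HasIntConstants.isRun_retimeRun {B : RTA} (hB : B.HasIntConstants)
    (e : CircleDeg1Liftˣ) {ρ : List (ℝ × REdge)} (h : B.IsRun ρ) : B.IsRun (retimeRun e 0 ρ) := by
  have h0 : retimeVal e 0 (fun _ => 0) = fun _ => 0 := by
    funext x
    simp [retimeVal]
  exact ⟨h.1, h0 ▸ hB.isRunFrom_retimeRun e h.2⟩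

lemma runDur_retimeRun (F : ℝ → ℝ) (s : ℝ) (ρ : List (ℝ × REdge)) :
    runDur (retimeRun F s ρ) = F (s + runDur ρ) - F s := by
  induction ρ generalizing s with
  | nil => simp [retimeRun, runDur]
  | cons q ρ ih =>
    obtain ⟨d, e⟩ := q
    have := ih (s + d)
    simp only [runDur, retimeRun, List.map_cons, List.sum_cons] at this ⊢
    rw [this, add_assoc]
    ring

lemma RTA.locSeq_retimeRun (B : RTA) (F : ℝ → ℝ) (s : ℝ) (ρ : List (ℝ × REdge)) :
    B.locSeq (retimeRun F s ρ) = B.locSeq ρ := by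
  simp only [RTA.locSeq, List.cons.injEq, true_and]
  induction ρ generalizing s with
  | nil => rfl
  | cons q ρ ih =>
    obtain ⟨d, e⟩ := q
    simp [retimeRun, ih]

lemma retimeRun_append (F : ℝ → ℝ) (s : ℝ) (l₁ l₂ : List (ℝ × REdge)) :
    retimeRun F s (l₁ ++ l₂) = retimeRun F s l₁ ++ retimeRun F (s + runDur l₁) l₂ := by
  induction l₁ generalizing s with
  | nil => simp [retimeRun, runDur]
  | cons q l₁ ih =>
    obtain ⟨d, e⟩ := q
    simp only [List.cons_append, retimeRun, ih, runDur, List.map_cons, List.sum_cons, add_assoc]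

lemma durPrivAux_eq_add (p : ℕ) (l : List (ℝ × REdge)) (acc : ℝ) :
    durPrivAux p l acc = acc + durPrivAux p l 0 := by
  induction l generalizing acc with
  | nil => simp [durPrivAux]
  | cons q l ih =>
    obtain ⟨d, e⟩ := q
    by_cases h : e.2.2.2 = p
    · simp [durPrivAux, h]
    · simp only [durPrivAux, if_neg h]
      rw [ih, ih (0 + d)]
      ring

lemma durPrivAux_reverse_concat (p : ℕ) (l : List (ℝ × REdge)) (d : ℝ) (e : REdge) :
    durPrivAux p (l ++ [(d, e)]).reverse 0 =
      if e.2.2.2 = p then 0 else d + durPrivAux p l.reverse 0 := by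
  rw [List.reverse_concat, durPrivAux, durPrivAux_eq_add, zero_add]

lemma RTA.durPriv_retimeRun (B : RTA) (F : ℝ → ℝ) (s : ℝ) (ρ : List (ℝ × REdge)) :
    B.durPriv (retimeRun F s ρ) = F (s + runDur ρ) - F (s + runDur ρ - B.durPriv ρ) := by
  unfold RTA.durPriv
  induction ρ using List.reverseRecOn with
  | nil => simp [retimeRun, runDur, durPrivAux]
  | append_singleton ρ q ih =>
    obtain ⟨d, e⟩ := q
    have hdur : runDur (ρ ++ [(d, e)]) = runDur ρ + d := by simp [runDur]
    rw [retimeRun_append, show retimeRun F (s + runDur ρ) [(d, e)] =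
      [(F (s + runDur ρ + d) - F (s + runDur ρ), e)] from rfl, durPrivAux_reverse_concat,
      durPrivAux_reverse_concat, hdur]
    split_ifs
    · simp
    · rw [ih, show s + (runDur ρ + d) - (d + durPrivAux B.privLoc ρ.reverse 0) =
        s + runDur ρ - durPrivAux B.privLoc ρ.reverse 0 by ring, ← add_assoc]
      ring

lemma RTA.HasIntConstants.isPrivateRun_retimeRun {B : RTA} (hB : B.HasIntConstants)
    (e : CircleDeg1Liftˣ) {ρ : List (ℝ × REdge)} (h : B.IsPrivateRun ρ) :
    B.IsPrivateRun (retimeRun e 0 ρ) := by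
  obtain ⟨⟨hrun, hfinal⟩, hpriv⟩ := h
  rw [RTA.IsPrivateRun, RTA.ReachesFinal, B.locSeq_retimeRun]
  exact ⟨⟨hB.isRun_retimeRun e hrun, hfinal⟩, hpriv⟩

lemma RTA.HasIntConstants.isPublicRun_retimeRun {B : RTA} (hB : B.HasIntConstants)
    (e : CircleDeg1Liftˣ) {ρ : List (ℝ × REdge)} (h : B.IsPublicRun ρ) :
    B.IsPublicRun (retimeRun e 0 ρ) := by
  obtain ⟨⟨hrun, hfinal⟩, hpub⟩ := h
  rw [RTA.IsPublicRun, RTA.ReachesFinal, B.locSeq_retimeRun]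
  exact ⟨⟨hB.isRun_retimeRun e hrun, hfinal⟩, hpub⟩

lemma RTA.ofReal_durPriv_retimeRun_le_iff (B : RTA) (e : CircleDeg1Liftˣ) (ρ : List (ℝ × REdge))
    {γ : ℝ} (hγ : 0 ≤ γ) :
    ENNReal.ofReal (B.durPriv (retimeRun e 0 ρ)) ≤
        ENNReal.ofReal (e (runDur ρ) - e (runDur ρ - γ)) ↔
      ENNReal.ofReal (B.durPriv ρ) ≤ ENNReal.ofReal γ := by
  have hmono {a b : ℝ} : e a ≤ e b ↔ a ≤ b := (CircleDeg1Lift.units_strictMono e).le_iff_le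
  rw [ENNReal.ofReal_le_ofReal_iff (sub_nonneg.2 (hmono.2 (by linarith))),
    ENNReal.ofReal_le_ofReal_iff hγ, B.durPriv_retimeRun, zero_add, sub_le_sub_iff_left, hmono,
    sub_le_sub_iff_left]

lemma runDur_retimeRun_of_map_zero {e : CircleDeg1Liftˣ} (he : e 0 = 0) (ρ : List (ℝ × REdge)) :
    runDur (retimeRun e 0 ρ) = e (runDur ρ) := by
  rw [runDur_retimeRun, zero_add, he, sub_zero]

section Retiming

variable {B : RTA} {e : CircleDeg1Liftˣ} {T γ : ℝ}

lemma RTA.HasIntConstants.map_mem_DPub (hB : B.HasIntConstants) (he : e 0 = 0)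
    (hT : T ∈ B.DPub) : e T ∈ B.DPub := by
  obtain ⟨ρ, hρ, rfl⟩ := hT
  exact ⟨_, hB.isPublicRun_retimeRun e hρ, runDur_retimeRun_of_map_zero he ρ⟩

lemma RTA.HasIntConstants.map_mem_DVisitLE (hB : B.HasIntConstants) (he : e 0 = 0)
    (hγ : 0 ≤ γ) (hT : T ∈ B.DVisitLE (ENNReal.ofReal γ)) :
    e T ∈ B.DVisitLE (ENNReal.ofReal (e T - e (T - γ))) := by
  obtain ⟨ρ, hρ, hle, rfl⟩ := hT
  exact ⟨_, hB.isPrivateRun_retimeRun e hρ, (B.ofReal_durPriv_retimeRun_le_iff e ρ hγ).2 hle,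
    runDur_retimeRun_of_map_zero he ρ⟩

lemma RTA.HasIntConstants.map_mem_DVisitGT (hB : B.HasIntConstants) (he : e 0 = 0)
    (hγ : 0 ≤ γ) (hT : T ∈ B.DVisitGT (ENNReal.ofReal γ)) :
    e T ∈ B.DVisitGT (ENNReal.ofReal (e T - e (T - γ))) := by
  obtain ⟨ρ, hρ, hgt, rfl⟩ := hT
  refine ⟨_, hB.isPrivateRun_retimeRun e hρ, ?_, runDur_retimeRun_of_map_zero he ρ⟩
  exact lt_of_not_ge fun hle => hgt.not_ge ((B.ofReal_durPriv_retimeRun_le_iff e ρ hγ).1 hle)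

lemma RTA.HasIntConstants.mem_DPub_iff (hB : B.HasIntConstants) (he : e 0 = 0) :
    T ∈ B.DPub ↔ e T ∈ B.DPub := by
  refine ⟨hB.map_mem_DPub he, fun h => ?_⟩
  simpa only [CircleDeg1Lift.units_inv_apply_apply] using
    hB.map_mem_DPub (CircleDeg1Lift.units_inv_map_zero he) h

lemma RTA.HasIntConstants.fullyOpaque_of_forall_exists_units (hB : B.HasIntConstants)
    {γ' : ℝ} (hγ : 0 ≤ γ)
    (h : ∀ T, ∃ e : CircleDeg1Liftˣ, e 0 = 0 ∧ e T - e (T - γ) = γ')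
    (hop : B.FullyOpaque (ENNReal.ofReal γ')) : B.FullyOpaque (ENNReal.ofReal γ) := by
  ext T
  obtain ⟨e, he, hγ'⟩ := h T
  rw [mem_union,
    CircleDeg1Lift.iff_map_of_forall_units_imp (fun e he _ _ => hB.map_mem_DVisitLE he) he hγ,
    CircleDeg1Lift.iff_map_of_forall_units_imp (fun e he _ _ => hB.map_mem_DVisitGT he) he hγ,
    hB.mem_DPub_iff he, hγ', hop, mem_union]

end Retiming

lemma RTA.HasIntConstants.fullyOpaque_nat_add_iff {B : RTA} (hB : B.HasIntConstants) (n : ℕ)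
    {δ d : ℝ} (hδ : δ ∈ Ioo 0 1) (hd : d ∈ Ioo 0 1) :
    B.FullyOpaque (ENNReal.ofReal (n + δ)) ↔ B.FullyOpaque (ENNReal.ofReal (n + d)) := by
  have transfer {δ d : ℝ} (hδ : δ ∈ Ioo 0 1) (hd : d ∈ Ioo 0 1) :
      B.FullyOpaque (ENNReal.ofReal (n + d)) → B.FullyOpaque (ENNReal.ofReal (n + δ)) := by
    refine hB.fullyOpaque_of_forall_exists_units (by linarith [hδ.1, n.cast_nonneg (α := ℝ)])
      fun T => ?_
    obtain ⟨e, he, hT⟩ := CircleDeg1Lift.exists_units_map_zero_sub_eq hδ hd T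
    refine ⟨e, he, ?_⟩
    rw [show T - (n + δ) = T - δ - n by ring, CircleDeg1Lift.map_sub_nat]
    linarith
  exact ⟨transfer hd hδ, transfer hδ hd⟩

/-- Theorem 5, full case: for every timed automaton `A` with integer
constants and every non-integer bound `Δ ∈ ℝ≥0 \ ℕ`, the automaton `A` is fully
Δ-ET-opaque iff it is fully (⌊Δ⌋ + 1/2)-ET-opaque. -/
theorem full_opacity_half (A : TAData) (Δ : ℝ) (h0 : 0 ≤ Δ) (hni : ∀ n : ℕ, Δ ≠ (n : ℝ)) :
    A.toRTA.FullyOpaque (ENNReal.ofReal Δ) ↔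
      A.toRTA.FullyOpaque (ENNReal.ofReal ((⌊Δ⌋₊ : ℝ) + 1 / 2)) := by
  have hfract : Δ - ⌊Δ⌋₊ ∈ Ioo (0 : ℝ) 1 :=
    ⟨sub_pos.2 ((Nat.floor_le h0).lt_of_ne (hni _).symm), by linarith [Nat.lt_floor_add_one Δ]⟩
  have := A.toRTA_hasIntConstants.fullyOpaque_nat_add_iff ⌊Δ⌋₊ hfract
    (by norm_num : (1 / 2 : ℝ) ∈ Ioo 0 1)
  rwa [add_sub_cancel] at this
end

section
/- Reduction underlying the undecidability for PTAs: for every PTA A with initial location ℓ0 and final location ℓf, and a fresh clock x never reset in A, there exists a PTA A' (obtained from A by adding a new initial location ℓ0' with an urgent transition to ℓ0 and a transition guarded by x = 1 resetting x to a new private location ℓpriv, and a new final location ℓf' reachable from ℓpriv under x = 0 and from ℓf under x = 1) such that for every parameter valuation v: DVisit≤0(A'[v]) = {1}, DVisit>0(A'[v]) = ∅, DPub(A'[v]) ⊆ {1}, and for every Δ ∈ ℝ≥0 ∪ {+∞}, A'[v] is weakly Δ-ET-opaque if and only if A'[v] is fully Δ-ET-opaque, if and only if ℓf is reachable in A[v]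 by a run of duration exactly 1. -/
open scoped ENNReal

/-- A parametric constraint: (clock index, comparison code, parameter coefficients, constant),
representing `x ⋈ Σᵢ αᵢ pᵢ + d`. -/
abbrev PConstraint := ℕ × ℕ × List ℤ × ℤ
abbrev PGuard := List PConstraint
abbrev PEdge := ℕ × PGuard × List ℕ × ℕ

/-- A parametric timed automaton with integer coefficients, as finite data. -/
structure PTAData where
  init : ℕ
  privLoc : ℕ
  finalLoc : ℕ
  invs : List PGuard
  edges : List PEdge

/-- Instantiating a parametric constraint with a (rational) parameter valuation. -/
def pC (v : List ℚ) (c : PConstraint) : RConstraint :=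
  (c.1, c.2.1,
    ((((List.zipWith (fun (a : ℤ) (q : ℚ) => (a : ℚ) * q) c.2.2.1 v).sum + (c.2.2.2 : ℚ)) : ℚ) : ℝ))

/-- `A.eval v` : the timed automaton obtained from the PTA `A` by replacing each
parameter by its value under `v` (the `i`-th parameter gets value `v.getD i 0`). -/
def PTAData.eval (A : PTAData) (v : List ℚ) : RTA where
  init := A.init
  privLoc := A.privLoc
  finalLoc := A.finalLoc
  inv := fun ℓ => (A.invs.getD ℓ []).map (pC v)
  edges := A.edges.map (fun e => (e.1, e.2.1.map (pC v), e.2.2.1, e.2.2.2))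

/-- `P` holds of every constraint (in guards and invariants) of the PTA `A`. -/
def PTAData.OnConstraints (A : PTAData) (P : PConstraint → Prop) : Prop :=
  (∀ g ∈ A.invs, ∀ c ∈ g, P c) ∧ (∀ e ∈ A.edges, ∀ c ∈ e.2.1, P c)

/-- The PTA `A` only uses clocks with index `< n` (i.e., has at most `n` clocks). -/
def PTAData.ClocksIn (A : PTAData) (n : ℕ) : Prop :=
  A.OnConstraints (fun c => c.1 < n) ∧ ∀ e ∈ A.edges, ∀ x ∈ e.2.2.1, x < n

/-- The PTA `A` only uses parameters with index `< n` (i.e., has at most `n` parameters). -/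
def PTAData.ParamsIn (A : PTAData) (n : ℕ) : Prop :=
  A.OnConstraints (fun c => c.2.2.1.length ≤ n)

/-- The L/U sign condition for the coefficient `a` of one parameter (declared
lower-bound or upper-bound via `upper`) in a constraint with comparison code `op`:
upper-bound parameters occur nonnegatively in upper-bound (`<`, `≤`) constraints and
nonpositively in lower-bound (`≥`, `>`) ones, and symmetrically for lower-bound
parameters; in equality constraints parameters must not occur. -/
def luCoefOK (op : ℕ) (upper : Bool) (a : ℤ) : Prop :=
  if op ≤ 1 then (if upper then 0 ≤ a else a ≤ 0)
  else if op = 2 then a = 0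
  else (if upper then a ≤ 0 else 0 ≤ a)

/-- `A` is an L/U-PTA: its parameters can be partitioned into lower-bound and
upper-bound parameters satisfying the sign conditions in every constraint. -/
def PTAData.IsLU (A : PTAData) : Prop :=
  ∃ isUpper : ℕ → Bool,
    A.OnConstraints (fun c => ∀ i < c.2.2.1.length, luCoefOK c.2.1 (isUpper i) (c.2.2.1.getD i 0))

/-- The final location of `B` is reachable by a run of duration exactly 1. -/
def ReachesIn1 (B : RTA) : Prop :=
  ∃ ρ, B.IsRun ρ ∧ (B.locSeq ρ).getLast? = some B.finalLoc ∧ runDur ρ = 1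

/-!
Add a clock `x` never reset in `A` and three new locations: a new initial location `ℓ₀'`, the
private location and a new final location `ℓf'`. From `ℓ₀'` a run either enters `A` urgently, or
moves to the private location at `x = 1`, resetting `x`, and must then leave it at once (`x = 0`)
for `ℓf'`. No other run visits the private location, and this one has duration `1` and spends
no time after entering it, so `DVisit≤Δ = {1}` and `DVisit>Δ = ∅` for every `Δ`. A public run is an urgent entry into `A`, followed by a run of `A` whose last edge enters `ℓf`
at `x = 1`, i.e. at time `1`. Hence `DPub ⊆ {1}`, with `1 ∈ DPub` iff `ℓf` is reachable in `A[v]`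
in exactly one time unit, and both opacity notions reduce to `1 ∈ DPub`.
-/

def runEndLoc : ℕ → List (ℝ × REdge) → ℕ
  | ℓ, [] => ℓ
  | _, s :: σ => runEndLoc s.2.2.2.2 σ

def runEndVal (μ : ℕ → ℝ) : List (ℝ × REdge) → ℕ → ℝ
  | [] => μ
  | s :: σ => runEndVal (resetVal (delayVal μ s.1) s.2.2.2.1) σ

@[simp] theorem runDur_nil : runDur [] = 0 := rfl

@[simp] theorem runDur_cons_s17 (s : ℝ × REdge) (σ : List (ℝ × REdge)) :
    runDur (s :: σ) = s.1 + runDur σ := List.sum_cons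

@[simp] theorem runDur_append (σ τ : List (ℝ × REdge)) :
    runDur (σ ++ τ) = runDur σ + runDur τ := by
  simp [runDur]

theorem runEndLoc_mem (ℓ : ℕ) (σ : List (ℝ × REdge)) :
    runEndLoc ℓ σ ∈ ℓ :: σ.map (·.2.2.2.2) := by
  induction σ generalizing ℓ with
  | nil => exact List.mem_singleton_self ℓ
  | cons s σ ih => exact List.mem_cons_of_mem _ (ih _)

theorem runEndVal_of_forall_not_mem {y : ℕ} {μ : ℕ → ℝ} {σ : List (ℝ × REdge)}
    (hy : ∀ s ∈ σ, y ∉ s.2.2.2.1) : runEndVal μ σ y = μ y + runDur σ := by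
  induction σ generalizing μ with
  | nil => simp [runEndVal]
  | cons s σ ih =>
    rw [runEndVal, ih (fun t ht => hy t (List.mem_cons_of_mem _ ht))]
    simp [resetVal, delayVal, hy s List.mem_cons_self]
    ring

@[simp] theorem delayVal_zero (μ : ℕ → ℝ) : delayVal μ 0 = μ := by
  funext; simp [delayVal]

@[simp] theorem resetVal_nil (μ : ℕ → ℝ) : resetVal μ [] = μ := by
  funext; simp [resetVal]

@[simp] theorem satG_nil {μ : ℕ → ℝ} : satG μ [] := nofun

@[simp] theorem satG_singleton {μ : ℕ → ℝ} {c : RConstraint} : satG μ [c] ↔ satC μ c := by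
  simp [satG]

theorem satG_cons {μ : ℕ → ℝ} {c : RConstraint} {g : RGuard} :
    satG μ (c :: g) ↔ satC μ c ∧ satG μ g := by
  simp [satG]

theorem satG_append {μ : ℕ → ℝ} {g g' : RGuard} :
    satG μ (g ++ g') ↔ satG μ g ∧ satG μ g' := by
  simp [satG, or_imp, forall_and]

namespace RTA

variable {B B' : RTA}

theorem isRunFrom_cons {ℓ : ℕ} {μ : ℕ → ℝ} {s : ℝ × REdge} {σ : List (ℝ × REdge)} :
    B.IsRunFrom ℓ μ (s :: σ) ↔
      0 ≤ s.1 ∧ s.2 ∈ B.edges ∧ s.2.1 = ℓ ∧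
        (∀ t : ℝ, 0 ≤ t → t ≤ s.1 → satG (delayVal μ t) (B.inv ℓ)) ∧
        satG (delayVal μ s.1) s.2.2.1 ∧
        satG (resetVal (delayVal μ s.1) s.2.2.2.1) (B.inv s.2.2.2.2) ∧
        B.IsRunFrom s.2.2.2.2 (resetVal (delayVal μ s.1) s.2.2.2.1) σ :=
  Iff.rfl

theorem isRunFrom_append {ℓ : ℕ} {μ : ℕ → ℝ} {σ τ : List (ℝ × REdge)} :
    B.IsRunFrom ℓ μ (σ ++ τ) ↔
      B.IsRunFrom ℓ μ σ ∧ B.IsRunFrom (runEndLoc ℓ σ) (runEndVal μ σ) τ := by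
  induction σ generalizing ℓ μ with
  | nil => simp [RTA.IsRunFrom, runEndLoc, runEndVal]
  | cons s σ ih =>
    simp only [List.cons_append, isRunFrom_cons, ih, runEndLoc, runEndVal]
    tauto

theorem IsRunFrom.edge_mem {ℓ : ℕ} {μ : ℕ → ℝ} {σ : List (ℝ × REdge)}
    (h : B.IsRunFrom ℓ μ σ) : ∀ s ∈ σ, s.2 ∈ B.edges := by
  induction σ generalizing ℓ μ with
  | nil => simp
  | cons s σ ih =>
    obtain ⟨-, hs, -, -, -, -, hrest⟩ := isRunFrom_cons.1 h
    exact List.forall_mem_cons.2 ⟨hs, ih hrest⟩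

theorem IsRunFrom.of_edge_mem {ℓ : ℕ} {μ : ℕ → ℝ} {σ : List (ℝ × REdge)}
    (h : B.IsRunFrom ℓ μ σ) (hinv : B.inv = B'.inv) (hσ : ∀ s ∈ σ, s.2 ∈ B'.edges) :
    B'.IsRunFrom ℓ μ σ := by
  induction σ generalizing ℓ μ with
  | nil => trivial
  | cons s σ ih =>
    rw [List.forall_mem_cons] at hσ
    obtain ⟨hd, -, hsrc, hinvd, hg, hinvt, hrest⟩ := isRunFrom_cons.1 h
    rw [hinv] at hinvd hinvt
    exact ⟨hd, hσ.1, hsrc, hinvd, hg, hinvt, ih hrest hσ.2⟩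

theorem locSeq_append_singleton (σ : List (ℝ × REdge)) (s : ℝ × REdge) :
    B.locSeq (σ ++ [s]) = B.locSeq σ ++ [s.2.2.2.2] := by
  simp [RTA.locSeq]

theorem reachesFinal_append_singleton {σ : List (ℝ × REdge)} {s : ℝ × REdge} :
    B.ReachesFinal (σ ++ [s]) ↔
      B.IsRun (σ ++ [s]) ∧ s.2.2.2.2 = B.finalLoc ∧ B.finalLoc ∉ B.locSeq σ := by
  simp [RTA.ReachesFinal, locSeq_append_singleton]

theorem ReachesFinal.exists_eq_append (hne : B.init ≠ B.finalLoc) {ρ : List (ℝ × REdge)}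
    (h : B.ReachesFinal ρ) :
    ∃ σ s, ρ = σ ++ [s] ∧ s.2.2.2.2 = B.finalLoc ∧ B.finalLoc ∉ B.locSeq σ := by
  rcases List.eq_nil_or_concat' ρ with rfl | ⟨σ, s, rfl⟩
  · exact absurd (by simpa [RTA.locSeq] using h.2.1) hne
  · exact ⟨σ, s, rfl, (reachesFinal_append_singleton.1 h).2⟩

theorem isPublicRun_append_singleton {σ : List (ℝ × REdge)} {s : ℝ × REdge} :
    B.IsPublicRun (σ ++ [s]) ↔ B.ReachesFinal (σ ++ [s]) ∧ B.privLoc ∉ B.locSeq σ := by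
  simp [RTA.IsPublicRun, locSeq_append_singleton]

theorem dVisitLE_eq_singleton {ρ₀ : List (ℝ × REdge)} (hpriv : ∀ ρ, B.IsPrivateRun ρ ↔ ρ = ρ₀)
    (h₀ : B.durPriv ρ₀ = 0) (Δ : ℝ≥0∞) : B.DVisitLE Δ = {runDur ρ₀} := by
  ext t
  simp [RTA.DVisitLE, hpriv, h₀, eq_comm]

theorem dVisitGT_eq_empty {ρ₀ : List (ℝ × REdge)} (hpriv : ∀ ρ, B.IsPrivateRun ρ ↔ ρ = ρ₀)
    (h₀ : B.durPriv ρ₀ = 0) (Δ : ℝ≥0∞) : B.DVisitGT Δ = ∅ := by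
  ext t
  simp [RTA.DVisitGT, hpriv, h₀]

theorem weaklyOpaque_iff_mem_dPub {Δ : ℝ≥0∞} {t : ℝ} (hLE : B.DVisitLE Δ = {t})
    (hGT : B.DVisitGT Δ = ∅) : B.WeaklyOpaque Δ ↔ t ∈ B.DPub := by
  simp [RTA.WeaklyOpaque, hLE, hGT]

theorem fullyOpaque_iff_mem_dPub {Δ : ℝ≥0∞} {t : ℝ} (hLE : B.DVisitLE Δ = {t})
    (hGT : B.DVisitGT Δ = ∅) (hPub : B.DPub ⊆ {t}) : B.FullyOpaque Δ ↔ t ∈ B.DPub := by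
  rw [RTA.FullyOpaque, hLE, hGT, Set.empty_union]
  exact ⟨fun h => h ▸ rfl, fun h => Set.Subset.antisymm (Set.singleton_subset_iff.2 h) hPub⟩

end RTA

namespace PTAData

def freshClock (A : PTAData) : ℕ := (A.edges.flatMap fun e => e.2.2.1).sum + 1

/-- Exceeds every location of `A` and the length of `A.invs`, so that the locations
`freshLoc`, `freshLoc + 1`, `freshLoc + 2` are new and carry the empty invariant. -/
def freshLoc (A : PTAData) : ℕ :=
  (A.init :: A.invs.length :: A.edges.flatMap fun e => [e.1, e.2.2.2]).sum + 1

def clockEq (A : PTAData) (k : ℤ) : PConstraint := (A.freshClock, 2, [], k)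

/-- After the resets `R`, a constraint `y ⋈ k` with `y ∈ R` reads `0 ⋈ k`; while the fresh
clock `x` equals `1` this is `x ⋈ k + 1`, which can be checked before the resets. -/
def invToGuard (A : PTAData) (R : List ℕ) (c : PConstraint) : PConstraint :=
  if c.1 ∈ R then (A.freshClock, c.2.1, c.2.2.1, c.2.2.2 + 1) else c

def finalEdge (A : PTAData) (e : PEdge) : PEdge :=
  (e.1, e.2.1 ++ A.clockEq 1 :: (A.invs.getD A.finalLoc []).map (A.invToGuard e.2.2.1),
    e.2.2.1, A.freshLoc + 2)

def enterEdge (A : PTAData) : PEdge := (A.freshLoc, [A.clockEq 0], [], A.init)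

def privEdge (A : PTAData) : PEdge :=
  (A.freshLoc, [A.clockEq 1], [A.freshClock], A.freshLoc + 1)

def leavePrivEdge (A : PTAData) : PEdge :=
  (A.freshLoc + 1, [A.clockEq 0], [], A.freshLoc + 2)

/-- An edge `ℓf → ℓf'` guarded by `x = 1` would allow waiting in `ℓf`, i.e. accept runs of `A`
that reach `ℓf` before time `1`. Instead, every edge into `ℓf` gets a copy `finalEdge` into `ℓf'`,
guarded in addition by `x = 1` and by the invariant of `ℓf`. -/
def reduction (A : PTAData) : PTAData where
  init := A.freshLoc
  privLoc := A.freshLoc + 1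
  finalLoc := A.freshLoc + 2
  invs := A.invs
  edges := A.edges ++ (A.edges.filter (·.2.2.2 = A.finalLoc)).map A.finalEdge ++
    [A.enterEdge, A.privEdge, A.leavePrivEdge]

def evalEdge (v : List ℚ) (e : PEdge) : REdge := (e.1, e.2.1.map (pC v), e.2.2.1, e.2.2.2)

def privRun (A : PTAData) (v : List ℚ) : List (ℝ × REdge) :=
  [(1, evalEdge v A.privEdge), (0, evalEdge v A.leavePrivEdge)]

def pubRun (A : PTAData) (v : List ℚ) (σ : List (ℝ × REdge)) (d : ℝ) (e : PEdge) :
    List (ℝ × REdge) :=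
  (0, evalEdge v A.enterEdge) :: (σ ++ [(d, evalEdge v (A.finalEdge e))])

def IsRunToFinalAt1 (A : PTAData) (v : List ℚ) (σ : List (ℝ × REdge)) (d : ℝ) (e : PEdge) :
    Prop :=
  e ∈ A.edges ∧ e.2.2.2 = A.finalLoc ∧ (A.eval v).IsRun (σ ++ [(d, evalEdge v e)]) ∧
    runDur σ + d = 1

section

variable {A : PTAData} {v : List ℚ}

open RTA

theorem freshClock_not_mem_resets {e : PEdge} (he : e ∈ A.edges) :
    A.freshClock ∉ e.2.2.1 := fun hx =>
  (List.le_sum_of_mem (List.mem_flatMap.2 ⟨e, he, hx⟩)).not_gt (Nat.lt_succ_self _)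

theorem init_lt_freshLoc : A.init < A.freshLoc :=
  Nat.lt_succ_of_le (List.le_sum_of_mem List.mem_cons_self)

theorem length_invs_le_freshLoc : A.invs.length ≤ A.freshLoc :=
  Nat.le_succ_of_le (List.le_sum_of_mem (List.mem_cons_of_mem _ List.mem_cons_self))

theorem lt_freshLoc_of_mem_edges {e : PEdge} (he : e ∈ A.edges) :
    e.1 < A.freshLoc ∧ e.2.2.2 < A.freshLoc := by
  have h {ℓ : ℕ} (hℓ : ℓ ∈ [e.1, e.2.2.2]) : ℓ < A.freshLoc :=
    Nat.lt_succ_of_le (List.le_sum_of_mem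
      (List.mem_cons_of_mem _ (List.mem_cons_of_mem _ (List.mem_flatMap.2 ⟨e, he, hℓ⟩))))
  exact ⟨h (by simp), h (by simp)⟩

theorem eval_edges : (A.eval v).edges = A.edges.map (evalEdge v) := rfl

theorem satG_eval_inv_of_le {ℓ : ℕ} (h : A.freshLoc ≤ ℓ) {μ : ℕ → ℝ} :
    satG μ ((A.eval v).inv ℓ) := by
  simp [PTAData.eval, List.getElem?_eq_none (length_invs_le_freshLoc.trans h)]

@[simp] theorem eval_init : (A.eval v).init = A.init := rfl
@[simp] theorem eval_privLoc : (A.eval v).privLoc = A.privLoc := rfl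
@[simp] theorem eval_finalLoc : (A.eval v).finalLoc = A.finalLoc := rfl
@[simp] theorem reduction_init : A.reduction.init = A.freshLoc := rfl
@[simp] theorem reduction_privLoc : A.reduction.privLoc = A.freshLoc + 1 := rfl
@[simp] theorem reduction_finalLoc : A.reduction.finalLoc = A.freshLoc + 2 := rfl
@[simp] theorem reduction_eval_inv : (A.reduction.eval v).inv = (A.eval v).inv := rfl

@[simp] theorem evalEdge_src (e : PEdge) : (evalEdge v e).1 = e.1 := rfl
@[simp] theorem evalEdge_guard (e : PEdge) : (evalEdge v e).2.1 = e.2.1.map (pC v) := rfl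
@[simp] theorem evalEdge_resets (e : PEdge) : (evalEdge v e).2.2.1 = e.2.2.1 := rfl
@[simp] theorem evalEdge_tgt (e : PEdge) : (evalEdge v e).2.2.2 = e.2.2.2 := rfl

theorem bounds_of_mem_eval_edges {b : REdge} (hb : b ∈ (A.eval v).edges) :
    b.1 < A.freshLoc ∧ b.2.2.2 < A.freshLoc ∧ A.freshClock ∉ b.2.2.1 := by
  obtain ⟨e, he, rfl⟩ := List.mem_map.1 hb
  exact ⟨(lt_freshLoc_of_mem_edges he).1, (lt_freshLoc_of_mem_edges he).2,
    freshClock_not_mem_resets he⟩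

theorem mem_reduction_edges {b : REdge} :
    b ∈ (A.reduction.eval v).edges ↔ b ∈ (A.eval v).edges ∨
      (∃ e ∈ A.edges, e.2.2.2 = A.finalLoc ∧ b = evalEdge v (A.finalEdge e)) ∨
      b = evalEdge v A.enterEdge ∨ b = evalEdge v A.privEdge ∨
      b = evalEdge v A.leavePrivEdge := by
  rw [eval_edges, eval_edges]
  simp [reduction, eq_comm (b := b)]

theorem eq_enterEdge_or_privEdge {b : REdge} (hb : b ∈ (A.reduction.eval v).edges)
    (h : b.1 = A.freshLoc) : b = evalEdge v A.enterEdge ∨ b = evalEdge v A.privEdge := by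
  rcases mem_reduction_edges.1 hb with hb | ⟨e, he, -, rfl⟩ | rfl | rfl | rfl
  · exact absurd h (bounds_of_mem_eval_edges hb).1.ne
  · exact absurd h (lt_freshLoc_of_mem_edges he).1.ne
  · exact .inl rfl
  · exact .inr rfl
  · simp [leavePrivEdge] at h

theorem eq_leavePrivEdge {b : REdge} (hb : b ∈ (A.reduction.eval v).edges)
    (h : b.1 = A.freshLoc + 1) : b = evalEdge v A.leavePrivEdge := by
  rcases mem_reduction_edges.1 hb with hb | ⟨e, he, -, rfl⟩ | rfl | rfl | rfl
  · have := (bounds_of_mem_eval_edges hb).1; omega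
  · have := (lt_freshLoc_of_mem_edges he).1; simp [finalEdge] at h; omega
  · simp [enterEdge] at h
  · simp [privEdge] at h
  · rfl

theorem mem_eval_edges_of_tgt_ne {b : REdge} (hb : b ∈ (A.reduction.eval v).edges)
    (h : b.1 < A.freshLoc) (ht : b.2.2.2 ≠ A.freshLoc + 2) : b ∈ (A.eval v).edges := by
  rcases mem_reduction_edges.1 hb with hb | ⟨e, he, -, rfl⟩ | rfl | rfl | rfl
  · exact hb
  · exact absurd rfl ht
  · simp [enterEdge] at h
  · simp [privEdge] at h
  · simp [leavePrivEdge] at h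

theorem eq_finalEdge_of_tgt_eq {b : REdge} (hb : b ∈ (A.reduction.eval v).edges)
    (h : b.1 < A.freshLoc) (ht : b.2.2.2 = A.freshLoc + 2) :
    ∃ e ∈ A.edges, e.2.2.2 = A.finalLoc ∧ b = evalEdge v (A.finalEdge e) := by
  rcases mem_reduction_edges.1 hb with hb | he | rfl | rfl | rfl
  · have := (bounds_of_mem_eval_edges hb).2.1; omega
  · exact he
  · simp [enterEdge] at h
  · simp [privEdge] at h
  · simp [leavePrivEdge] at h

theorem satC_clockEq {μ : ℕ → ℝ} {k : ℤ} :
    satC μ (pC v (A.clockEq k)) ↔ μ A.freshClock = k := by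
  simp [satC, pC, clockEq]

theorem satC_invToGuard {μ : ℕ → ℝ} (hx : μ A.freshClock = 1) (R : List ℕ) (c : PConstraint) :
    satC μ (pC v (A.invToGuard R c)) ↔ satC (resetVal μ R) (pC v c) := by
  obtain ⟨y, op, α, k⟩ := c
  by_cases hy : y ∈ R
  · have hy0 : resetVal μ R y = 0 := if_pos hy
    simp only [invToGuard, hy, if_true, pC]
    push_cast
    rcases op with _ | _ | _ | _ | op <;> simp only [satC, hx, hy0] <;> constructor <;>
      intro h <;> linarith
  · simp [invToGuard, hy, satC, pC, resetVal]

theorem satG_finalEdge {μ : ℕ → ℝ} {e : PEdge} :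
    satG μ (evalEdge v (A.finalEdge e)).2.1 ↔ satG μ (evalEdge v e).2.1 ∧ μ A.freshClock = 1 ∧
      satG (resetVal μ e.2.2.1) ((A.eval v).inv A.finalLoc) := by
  simp only [finalEdge, evalEdge_guard, List.map_append, List.map_cons, satG_append, satG_cons,
    satC_clockEq, Int.cast_one]
  by_cases hx : μ A.freshClock = 1
  · simp only [satG, PTAData.eval, List.map_map, List.forall_mem_map, Function.comp_apply,
      satC_invToGuard hx, hx]
  · simp [hx]

theorem isRunFrom_finalEdge {e : PEdge} (he : e ∈ A.edges) (hf : e.2.2.2 = A.finalLoc) {ℓ : ℕ}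
    {μ : ℕ → ℝ} {d : ℝ} :
    (A.reduction.eval v).IsRunFrom ℓ μ [(d, evalEdge v (A.finalEdge e))] ↔
      (A.eval v).IsRunFrom ℓ μ [(d, evalEdge v e)] ∧ μ A.freshClock + d = 1 := by
  have hmem : evalEdge v (A.finalEdge e) ∈ (A.reduction.eval v).edges :=
    mem_reduction_edges.2 (.inr (.inl ⟨e, he, hf, rfl⟩))
  constructor
  · rintro ⟨hd, -, hsrc, hinvd, hg, -, -⟩
    obtain ⟨hg, hx, hinvf⟩ := satG_finalEdge.1 hg
    exact ⟨⟨hd, List.mem_map_of_mem he, hsrc, hinvd, hg, hf ▸ hinvf, trivial⟩, hx⟩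
  · rintro ⟨⟨hd, -, hsrc, hinvd, hg, hinvf, -⟩, hx⟩
    exact ⟨hd, hmem, hsrc, hinvd, satG_finalEdge.2 ⟨hg, hx, hf ▸ hinvf⟩,
      satG_eval_inv_of_le (A := A) (Nat.le_add_right _ 2), trivial⟩

theorem edge_mem_of_isRunFrom_reduction {ℓ : ℕ} {μ : ℕ → ℝ} {σ : List (ℝ × REdge)}
    (h : (A.reduction.eval v).IsRunFrom ℓ μ σ) (hℓ : ℓ < A.freshLoc)
    (hσ : ∀ s ∈ σ, s.2.2.2.2 ≠ A.freshLoc + 2) : ∀ s ∈ σ, s.2 ∈ (A.eval v).edges := by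
  induction σ generalizing ℓ μ with
  | nil => simp
  | cons s σ ih =>
    rw [List.forall_mem_cons] at hσ ⊢
    obtain ⟨-, hmem, hsrc, -, -, -, hrest⟩ := isRunFrom_cons.1 h
    have hs := mem_eval_edges_of_tgt_ne hmem (hsrc ▸ hℓ) hσ.1
    exact ⟨hs, ih hrest (bounds_of_mem_eval_edges hs).2.1 hσ.2⟩

theorem isRunFrom_reduction_of_eval {ℓ : ℕ} {μ : ℕ → ℝ} {σ : List (ℝ × REdge)}
    (h : (A.eval v).IsRunFrom ℓ μ σ) : (A.reduction.eval v).IsRunFrom ℓ μ σ :=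
  h.of_edge_mem rfl fun s hs => mem_reduction_edges.2 (.inl (h.edge_mem s hs))

theorem tail_of_isRunFrom_privLoc {μ : ℕ → ℝ} {σ : List (ℝ × REdge)} {s : ℝ × REdge}
    (h : (A.reduction.eval v).IsRunFrom (A.freshLoc + 1) μ (σ ++ [s]))
    (hx : μ A.freshClock = 0) (hσ : ∀ s ∈ σ, s.2.2.2.2 ≠ A.freshLoc + 2) :
    σ = [] ∧ s = (0, evalEdge v A.leavePrivEdge) := by
  rcases σ with _ | ⟨s₁, σ⟩
  · obtain ⟨d, b⟩ := s
    obtain ⟨-, hmem, hsrc, -, hg, -⟩ := isRunFrom_cons.1 h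
    obtain rfl := eq_leavePrivEdge hmem hsrc
    have hd : μ A.freshClock + d = 0 := by simpa [leavePrivEdge, satC_clockEq, delayVal] using hg
    exact ⟨rfl, by rw [hx, zero_add] at hd; rw [hd]⟩
  · obtain ⟨-, hmem, hsrc, -⟩ := isRunFrom_cons.1 h
    exact absurd (by rw [eq_leavePrivEdge hmem hsrc]; rfl) (hσ s₁ List.mem_cons_self)

theorem tail_of_isRunFrom_lt_freshLoc {ℓ : ℕ} {μ : ℕ → ℝ} {σ : List (ℝ × REdge)}
    {s : ℝ × REdge} (h : (A.reduction.eval v).IsRunFrom ℓ μ (σ ++ [s])) (hℓ : ℓ < A.freshLoc)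
    (hσ : ∀ s ∈ σ, s.2.2.2.2 ≠ A.freshLoc + 2) (hs : s.2.2.2.2 = A.freshLoc + 2) :
    ∃ e ∈ A.edges, e.2.2.2 = A.finalLoc ∧ s = (s.1, evalEdge v (A.finalEdge e)) ∧
      (A.eval v).IsRunFrom ℓ μ (σ ++ [(s.1, evalEdge v e)]) ∧
      μ A.freshClock + runDur σ + s.1 = 1 := by
  obtain ⟨hσrun, hsrun⟩ := isRunFrom_append.1 h
  have hE := edge_mem_of_isRunFrom_reduction hσrun hℓ hσ
  have hend : runEndLoc ℓ σ < A.freshLoc := by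
    rcases List.mem_cons.1 (runEndLoc_mem ℓ σ) with hl | hl
    · rwa [hl]
    · obtain ⟨s, hs, hl⟩ := List.mem_map.1 hl
      exact hl ▸ (bounds_of_mem_eval_edges (hE s hs)).2.1
  obtain ⟨d, b⟩ := s
  obtain ⟨-, hmem, hsrc, -⟩ := isRunFrom_cons.1 hsrun
  obtain ⟨e, he, hf, rfl⟩ := eq_finalEdge_of_tgt_eq hmem (hsrc ▸ hend) hs
  obtain ⟨hstep, hdur⟩ := (isRunFrom_finalEdge he hf).1 hsrun
  have hx : runEndVal μ σ A.freshClock = μ A.freshClock + runDur σ :=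
    runEndVal_of_forall_not_mem fun s hs => (bounds_of_mem_eval_edges (hE s hs)).2.2
  exact ⟨e, he, hf, rfl, isRunFrom_append.2 ⟨hσrun.of_edge_mem rfl hE, hstep⟩, hx ▸ hdur⟩

theorem eq_privRun_or_eq_pubRun {ρ : List (ℝ × REdge)}
    (h : (A.reduction.eval v).ReachesFinal ρ) :
    ρ = A.privRun v ∨ ∃ σ d e, A.IsRunToFinalAt1 v σ d e ∧ ρ = A.pubRun v σ d e := by
  obtain ⟨σ, s, rfl, hs, hσ⟩ := h.exists_eq_append (by simp)
  obtain ⟨-, hrun⟩ := h.1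
  simp only [RTA.locSeq, List.mem_cons, List.mem_map] at hσ
  rcases σ with _ | ⟨⟨d₀, b₀⟩, σ⟩
  · obtain ⟨-, hmem, hsrc, -⟩ := isRunFrom_cons.1 hrun
    rcases eq_enterEdge_or_privEdge hmem hsrc with hb | hb <;> rw [hb] at hs
    · exact absurd hs (by simp [enterEdge]; have := A.init_lt_freshLoc; omega)
    · exact absurd hs (by simp [privEdge])
  rw [List.cons_append] at hrun
  obtain ⟨-, hmem, hsrc, -, hg, hinv, hrest⟩ := isRunFrom_cons.1 hrun
  have hσ' : ∀ s ∈ σ, s.2.2.2.2 ≠ A.freshLoc + 2 := fun s hs' hs'' =>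
    hσ (.inr ⟨s, List.mem_cons_of_mem _ hs', hs''⟩)
  dsimp only at hg hinv hrest
  rcases eq_enterEdge_or_privEdge hmem hsrc with rfl | rfl
  · obtain rfl : d₀ = 0 := by simpa [enterEdge, satC_clockEq, delayVal] using hg
    simp only [enterEdge, evalEdge_resets, evalEdge_tgt, delayVal_zero, resetVal_nil]
      at hinv hrest
    obtain ⟨e, he, hf, hs, hrun', hdur⟩ :=
      tail_of_isRunFrom_lt_freshLoc hrest A.init_lt_freshLoc hσ' hs
    exact .inr ⟨σ, s.1, e, ⟨he, hf, ⟨hinv, hrun'⟩, by simpa using hdur⟩, by rw [hs]; rfl⟩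
  · obtain rfl : d₀ = 1 := by simpa [privEdge, satC_clockEq, delayVal] using hg
    obtain ⟨rfl, rfl⟩ := tail_of_isRunFrom_privLoc hrest (by simp [privEdge, resetVal]) hσ'
    exact .inl rfl

theorem isPrivateRun_privRun : (A.reduction.eval v).IsPrivateRun (A.privRun v) := by
  have hinv {ℓ : ℕ} (h : A.freshLoc ≤ ℓ) {μ : ℕ → ℝ} := satG_eval_inv_of_le (v := v) (μ := μ) h
  have hP := mem_reduction_edges (A := A) (v := v) |>.2 (.inr (.inr (.inr (.inl rfl))))
  have hF := mem_reduction_edges (A := A) (v := v) |>.2 (.inr (.inr (.inr (.inr rfl))))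
  refine ⟨⟨⟨hinv le_rfl, ?_⟩, ?_⟩, ?_⟩
  · refine ⟨zero_le_one, hP, rfl, fun _ _ _ => hinv le_rfl, ?_, hinv (by simp [privEdge]), le_rfl,
      hF, rfl, fun _ _ _ => hinv (by simp [privEdge]), ?_, hinv (by simp [leavePrivEdge]), trivial⟩
    · simp [privEdge, satC_clockEq, delayVal]
    · simp [leavePrivEdge, privEdge, satC_clockEq, resetVal]
  · simp [RTA.locSeq, privRun, privEdge, leavePrivEdge]
  · simp [RTA.locSeq, privRun, privEdge, leavePrivEdge]

theorem durPriv_privRun : (A.reduction.eval v).durPriv (A.privRun v) = 0 := by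
  simp [RTA.durPriv, privRun, durPrivAux, privEdge, leavePrivEdge]

theorem runDur_privRun : runDur (A.privRun v) = 1 := by
  simp [privRun]

theorem isPublicRun_pubRun {σ : List (ℝ × REdge)} {d : ℝ} {e : PEdge}
    (h : A.IsRunToFinalAt1 v σ d e) : (A.reduction.eval v).IsPublicRun (A.pubRun v σ d e) := by
  obtain ⟨he, hf, ⟨hinit, hrun⟩, hdur⟩ := h
  obtain ⟨hσ, hlast⟩ := isRunFrom_append.1 hrun
  have hlocs : ∀ ℓ ∈ (A.reduction.eval v).locSeq ((0, evalEdge v A.enterEdge) :: σ),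
      ℓ ≤ A.freshLoc := by
    simp only [RTA.locSeq, List.map_cons, List.mem_cons, List.mem_map]
    rintro ℓ (rfl | rfl | ⟨s, hs, rfl⟩)
    · exact le_rfl
    · exact A.init_lt_freshLoc.le
    · exact (bounds_of_mem_eval_edges (hσ.edge_mem s hs)).2.1.le
  have hinv {ℓ : ℕ} (h : A.freshLoc ≤ ℓ) {μ : ℕ → ℝ} := satG_eval_inv_of_le (v := v) (μ := μ) h
  have hx : runEndVal (fun _ => 0) σ A.freshClock + d = 1 := by
    rw [runEndVal_of_forall_not_mem fun s hs => (bounds_of_mem_eval_edges (hσ.edge_mem s hs)).2.2]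
    linarith
  have htail : (A.reduction.eval v).IsRunFrom A.init (fun _ => 0)
      (σ ++ [(d, evalEdge v (A.finalEdge e))]) :=
    isRunFrom_append.2 ⟨isRunFrom_reduction_of_eval hσ, (isRunFrom_finalEdge he hf).2 ⟨hlast, hx⟩⟩
  have hI := mem_reduction_edges (A := A) (v := v) |>.2 (.inr (.inr (.inl rfl)))
  show (A.reduction.eval v).IsPublicRun (((0, evalEdge v A.enterEdge) :: σ) ++ [_])
  rw [isPublicRun_append_singleton, reachesFinal_append_singleton]
  refine ⟨⟨⟨hinv le_rfl, ?_⟩, rfl, fun h => by simpa using hlocs _ h⟩,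
    fun h => by simpa using hlocs _ h⟩
  refine ⟨le_rfl, hI, rfl, fun _ _ _ => hinv le_rfl, ?_, ?_, ?_⟩
  · simp [enterEdge, satC_clockEq]
  · simpa [enterEdge] using hinit
  · simpa [enterEdge] using htail

theorem isPrivateRun_reduction_iff {ρ : List (ℝ × REdge)} :
    (A.reduction.eval v).IsPrivateRun ρ ↔ ρ = A.privRun v := by
  refine ⟨fun h => ?_, fun h => h ▸ isPrivateRun_privRun⟩
  rcases eq_privRun_or_eq_pubRun h.1 with h' | ⟨σ, d, e, hσ, rfl⟩
  · exact h'
  · exact absurd h.2 (isPublicRun_pubRun hσ).2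

theorem isPublicRun_reduction_iff {ρ : List (ℝ × REdge)} :
    (A.reduction.eval v).IsPublicRun ρ ↔
      ∃ σ d e, A.IsRunToFinalAt1 v σ d e ∧ ρ = A.pubRun v σ d e := by
  refine ⟨fun h => ?_, fun ⟨σ, d, e, hσ, hρ⟩ => hρ ▸ isPublicRun_pubRun hσ⟩
  rcases eq_privRun_or_eq_pubRun h.1 with rfl | h'
  · exact absurd isPrivateRun_privRun.2 h.2
  · exact h'

theorem reachesIn1_eval_iff :
    ReachesIn1 (A.eval v) ↔ ∃ σ d e, A.IsRunToFinalAt1 v σ d e := by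
  constructor
  · rintro ⟨ρ, hρ, hlast, hdur⟩
    rcases List.eq_nil_or_concat' ρ with rfl | ⟨σ, ⟨d, b⟩, rfl⟩
    · simp at hdur
    obtain ⟨e, he, rfl⟩ := List.mem_map.1 (hρ.2.edge_mem _ (List.mem_concat_self ..))
    rw [RTA.locSeq_append_singleton, List.getLast?_concat, Option.some_inj] at hlast
    exact ⟨σ, d, e, he, hlast, hρ, by simpa using hdur⟩
  · rintro ⟨σ, d, e, -, hf, hρ, hdur⟩
    exact ⟨σ ++ [(d, evalEdge v e)], hρ, by simp [RTA.locSeq_append_singleton, hf],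
      by simpa using hdur⟩

theorem dPub_reduction :
    (A.reduction.eval v).DPub = {t | t = 1 ∧ ReachesIn1 (A.eval v)} := by
  ext t
  simp only [RTA.DPub, isPublicRun_reduction_iff, reachesIn1_eval_iff, Set.mem_ofPred_eq]
  constructor
  · rintro ⟨_, ⟨σ, d, e, hσ, rfl⟩, rfl⟩
    exact ⟨by simpa [pubRun] using hσ.2.2.2, σ, d, e, hσ⟩
  · rintro ⟨rfl, σ, d, e, hσ⟩
    exact ⟨_, ⟨σ, d, e, hσ, rfl⟩, by simpa [pubRun] using hσ.2.2.2⟩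

end

end PTAData

/-- reduction underlying Theorem 7: for every PTA `A` there exists a
PTA `A'` (obtained from `A` by adding a fresh initial location with an urgent transition
to the initial location of `A` and a transition at time 1 to a fresh private location,
and a fresh final location reachable from the private location in zero time and from the
final location of `A` at time 1 on a fresh clock never reset in `A`) such that for every
nonnegative parameter valuation `v`: `DVisit≤0(A'[v]) = {1}`, `DVisit>0(A'[v]) = ∅`,
`DPub(A'[v]) ⊆ {1}`, and for every `Δ ∈ ℝ≥0 ∪ {+∞}`, `A'[v]` is weakly Δ-ET-opaque iff
`A'[v]` is fully Δ-ET-opaque, iff the final location of `A` is reachable in `A[v]` by a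
run of duration exactly 1. -/
theorem pta_reduction (A : PTAData) :
    ∃ A' : PTAData, ∀ v : List ℚ, (∀ q ∈ v, 0 ≤ q) →
      (A'.eval v).DVisitLE 0 = {1} ∧
      (A'.eval v).DVisitGT 0 = ∅ ∧
      (A'.eval v).DPub ⊆ {1} ∧
      ∀ Δ : ℝ≥0∞,
        (((A'.eval v).WeaklyOpaque Δ ↔ (A'.eval v).FullyOpaque Δ) ∧
          ((A'.eval v).WeaklyOpaque Δ ↔ ReachesIn1 (A.eval v))) := by
  refine ⟨A.reduction, fun v _ => ?_⟩
  have hLE (Δ : ℝ≥0∞) : (A.reduction.eval v).DVisitLE Δ = {1} := by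
    rw [RTA.dVisitLE_eq_singleton (fun _ => PTAData.isPrivateRun_reduction_iff)
      PTAData.durPriv_privRun, PTAData.runDur_privRun]
  have hGT (Δ : ℝ≥0∞) : (A.reduction.eval v).DVisitGT Δ = ∅ :=
    RTA.dVisitGT_eq_empty (fun _ => PTAData.isPrivateRun_reduction_iff)
      PTAData.durPriv_privRun Δ
  have hPub : (A.reduction.eval v).DPub ⊆ {1} := by
    rw [PTAData.dPub_reduction]
    exact fun t ht => ht.1
  have hPub1 : (1 : ℝ) ∈ (A.reduction.eval v).DPub ↔ ReachesIn1 (A.eval v) := by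
    simp [PTAData.dPub_reduction]
  refine ⟨hLE 0, hGT 0, hPub, fun Δ => ?_⟩
  rw [RTA.weaklyOpaque_iff_mem_dPub (hLE Δ) (hGT Δ),
    RTA.fullyOpaque_iff_mem_dPub (hLE Δ) (hGT Δ) hPub]
  exact ⟨Iff.rfl, hPub1⟩
end
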